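/- arXiv:1006.5153 — 7 statements merged into one kernel-verified Lean document; each statement's English description precedes it below -/
import Mathlib

section
/- For any n points z_1, ..., z_n on the complex unit circle, there exists a point z_0 of modulus 1 such that the sum over j of 1/|z_0 - z_j|^2 is at most n^2/4. -/
/-!
Put `f θ = ∏ⱼ |e^{iθ} - zⱼ|² = |p(e^{iθ})|²` with `p = ∏ⱼ (X - zⱼ)`, and let `θ₀` maximize `f`.
Each factor satisfies `(log |e^{iθ} - z|²)'' = -2 / |e^{iθ} - z|²`, so at the critical point `θ₀`
we get `f''(θ₀) = -2 f(θ₀) ∑ⱼ 1 / |e^{iθ₀} - zⱼ|²`.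
On the other hand, `f` is a trigonometric polynomial of degree `n`, and a quadrature formula of
M. Riesz type writes `f''(θ₀) + (n² / 2) f(θ₀)` as a combination with nonnegative weights of the
values `f(θ₀ + (2k+1)π/n)` and of the differences `f(θ₀) - f(θ₀ + 2kπ/n)`. Both are nonnegative
at a maximum, so `-f''(θ₀) ≤ (n² / 2) f(θ₀)`, and dividing by `2 f(θ₀) > 0` gives
`∑ⱼ 1 / |e^{iθ₀} - zⱼ|² ≤ n² / 4`. The quadrature formula is
checked on each monomial `e^{idθ}`, `|d| ≤ n`, by discrete Parseval identities over the `n`-th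
roots of `1` and of `-1`.
-/

open Complex Finset ComplexConjugate
open scoped Real

namespace IsPrimitiveRoot
variable {n : ℕ} {μ : ℂ}

theorem sum_pow_zpow_sub (hμ : IsPrimitiveRoot μ n) {i j : ℕ} (hi : i < n) (hj : j < n) :
    ∑ k ∈ range n, (μ ^ k) ^ ((i : ℤ) - j) = if i = j then (n : ℂ) else 0 := by
  split_ifs with hij
  · simp [hij]
  · have hne : μ ^ ((i : ℤ) - j) ≠ 1 := by
      rw [Ne, hμ.zpow_eq_one_iff_dvd]
      intro hdvd
      have := Int.eq_zero_of_abs_lt_dvd hdvd (abs_sub_lt_iff.2 ⟨by omega, by omega⟩)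
      omega
    have hpow : (μ ^ ((i : ℤ) - j)) ^ n = 1 := by
      rw [← zpow_natCast, ← zpow_mul, mul_comm, zpow_mul, zpow_natCast, hμ.pow_eq_one, one_zpow]
    simp_rw [← zpow_natCast μ, ← zpow_mul, mul_comm _ ((i : ℤ) - j), zpow_mul, zpow_natCast]
    rw [geom_sum_eq hne, hpow, sub_self, zero_div]

theorem sum_geom_mul_conj_geom (hμ : IsPrimitiveRoot μ n) {ξ : ℂ} (hξ : ‖ξ‖ = 1) {p q : ℕ}
    (hp : p ≤ n) (hq : q ≤ n) :
    ∑ k ∈ range n, (∑ i ∈ range p, (ξ * μ ^ k) ^ i) * conj (∑ j ∈ range q, (ξ * μ ^ k) ^ j)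
      = n * min p q := by
  rcases n.eq_zero_or_pos with rfl | hn
  · simp
  have hx : ∀ k, ‖ξ * μ ^ k‖ = 1 := fun k => by simp [hξ, hμ.norm'_eq_one hn.ne']
  have hpow : ∀ (x : ℂ) (i j : ℕ), x ≠ 0 → x ^ i * x⁻¹ ^ j = x ^ ((i : ℤ) - j) := by
    intro x i j hx0
    rw [inv_pow, ← zpow_natCast, ← zpow_natCast, ← zpow_neg, ← zpow_add₀ hx0, sub_eq_add_neg]
  calc ∑ k ∈ range n, (∑ i ∈ range p, (ξ * μ ^ k) ^ i) * conj (∑ j ∈ range q, (ξ * μ ^ k) ^ j)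
      = ∑ i ∈ range p, ∑ j ∈ range q,
          ξ ^ ((i : ℤ) - j) * ∑ k ∈ range n, (μ ^ k) ^ ((i : ℤ) - j) := by
        simp_rw [map_sum, map_pow, ← inv_eq_conj (hx _), sum_mul_sum, mul_sum]
        rw [sum_comm]
        refine sum_congr rfl fun i _ => ?_
        rw [sum_comm]
        refine sum_congr rfl fun j _ => sum_congr rfl fun k _ => ?_
        rw [hpow _ _ _ (norm_ne_zero_iff.1 (by rw [hx k]; exact one_ne_zero)), mul_zpow]
    _ = ∑ i ∈ range p, ∑ j ∈ range q, if i = j then (n : ℂ) else 0 := by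
        refine sum_congr rfl fun i hi => sum_congr rfl fun j hj => ?_
        rw [hμ.sum_pow_zpow_sub (by simp at hi; omega) (by simp at hj; omega)]
        split_ifs with hij <;> simp [hij]
    _ = n * min p q := by
        simp only [sum_ite_eq, sum_ite_mem, range_inter_range, sum_const, card_range,
          nsmul_eq_mul, mul_comm]
end IsPrimitiveRoot

noncomputable def nodeWeight (x : ℂ) : ℝ := 2 / normSq (1 - x)

theorem ofReal_nodeWeight (x : ℂ) : (nodeWeight x : ℂ) = 2 / ((1 - x) * (1 - conj x)) := by
  rw [nodeWeight, show 1 - conj x = conj (1 - x) by simp, mul_conj]; push_cast; rfl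

theorem nodeWeight_conj (x : ℂ) : nodeWeight (conj x) = nodeWeight x := by
  rw [nodeWeight, nodeWeight, ← normSq_conj, map_sub, map_one, conj_conj]

theorem nodeWeight_nonneg (x : ℂ) : 0 ≤ nodeWeight x := div_nonneg zero_le_two (normSq_nonneg _)

section Quadrature
variable {n : ℕ} {x μ ξ : ℂ}

theorem norm_eq_one_of_pow_eq_neg_one (hξ : ξ ^ n = -1) : ‖ξ‖ = 1 := by
  have hn : n ≠ 0 := by rintro rfl; norm_num at hξ
  exact norm_eq_one_of_pow_eq_one (n := 2 * n) (by rw [pow_mul', hξ]; norm_num) (by omega)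

theorem nodeWeight_mul_pow_of_pow_eq_neg_one (hx : x ^ n = -1) (d : ℕ) :
    (nodeWeight x : ℂ) * x ^ d
      = (∑ i ∈ range n, x ^ i - 2 * ∑ i ∈ range d, x ^ i) * conj (∑ j ∈ range n, x ^ j) / 2 := by
  set G := ∑ i ∈ range n, x ^ i
  set H := ∑ i ∈ range d, x ^ i
  have hG : (1 - x) * G = 2 := by rw [mul_neg_geom_sum, hx]; ring
  have hG' : (1 - conj x) * conj G = 2 := by simpa using (congrArg conj hG).trans (map_ofNat _ 2)
  have hH : (1 - x) * H = 1 - x ^ d := mul_neg_geom_sum x d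
  have hab : (1 - x) * (1 - conj x) ≠ 0 := by
    refine mul_ne_zero ?_ ?_ <;> intro h
    · rw [h, zero_mul] at hG; norm_num at hG
    · rw [h, zero_mul] at hG'; norm_num at hG'
  rw [ofReal_nodeWeight, div_mul_eq_mul_div, div_eq_iff hab]
  linear_combination (-((1 - conj x) * conj G) / 2) * hG - (1 - (1 - x) * H) * hG' + 2 * hH

theorem sum_nodeWeight_mul_pow_of_pow_eq_neg_one (hμ : IsPrimitiveRoot μ n) (hξ : ξ ^ n = -1)
    {d : ℕ} (hd : d ≤ n) :
    ∑ k ∈ range n, (nodeWeight (ξ * μ ^ k) : ℂ) * (ξ * μ ^ k) ^ d = n ^ 2 / 2 - n * d := by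
  have hξ1 : ‖ξ‖ = 1 := norm_eq_one_of_pow_eq_neg_one hξ
  have hx : ∀ k, (ξ * μ ^ k) ^ n = -1 := fun k => by
    rw [mul_pow, hξ, ← pow_mul, mul_comm k n, pow_mul, hμ.pow_eq_one, one_pow, mul_one]
  simp_rw [nodeWeight_mul_pow_of_pow_eq_neg_one (hx _), sub_mul, ← sum_div, sum_sub_distrib,
    mul_assoc, ← mul_sum, hμ.sum_geom_mul_conj_geom hξ1 le_rfl le_rfl,
    hμ.sum_geom_mul_conj_geom hξ1 hd le_rfl, min_self, min_eq_left hd]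
  ring

theorem nodeWeight_mul_one_sub_pow_add_conj (hx1 : ‖x‖ = 1) (hx : x ≠ 1) (d : ℕ) :
    (nodeWeight x : ℂ) * ((1 - x ^ d) + (1 - conj x ^ d))
      = 2 * ((∑ i ∈ range d, x ^ i) * conj (∑ i ∈ range d, x ^ i)) := by
  set H := ∑ i ∈ range d, x ^ i
  have hH : (1 - x) * H = 1 - x ^ d := mul_neg_geom_sum x d
  have hH' : (1 - conj x) * conj H = 1 - conj x ^ d := by simpa using congrArg conj hH
  have hxx : x ^ d * conj x ^ d = 1 := by
    rw [← mul_pow, mul_conj, normSq_eq_norm_sq, hx1]; simp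
  have hab : (1 - x) * (1 - conj x) ≠ 0 := by
    rw [show 1 - conj x = conj (1 - x) by simp, mul_conj]
    exact_mod_cast (normSq_pos.2 (sub_ne_zero.2 hx.symm)).ne'
  rw [ofReal_nodeWeight, div_mul_eq_mul_div, div_eq_iff hab]
  linear_combination (-2 * (1 - conj x) * conj H) * hH - 2 * (1 - x ^ d) * hH' - 2 * hxx

theorem sum_nodeWeight_mul_one_sub_pow (hμ : IsPrimitiveRoot μ n) {d : ℕ} (hd : d ≤ n) :
    ∑ k ∈ Ico 1 n, (nodeWeight (μ ^ k) : ℂ) * (1 - (μ ^ k) ^ d) = d * (n - d) := by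
  rcases n.eq_zero_or_pos with rfl | hn
  · simp_all
  have hμ1 : ‖μ‖ = 1 := hμ.norm'_eq_one hn.ne'
  -- `k ↦ n - k` conjugates the node `μ ^ k`; averaging the two forms of the sum gives
  -- `∑ |∑_{i<d} μ^{ki}|²`, a Parseval sum with the `k = 0` term missing.
  have hreflect : ∑ k ∈ Ico 1 n, (nodeWeight (μ ^ k) : ℂ) * (1 - (μ ^ k) ^ d)
      = ∑ k ∈ Ico 1 n, (nodeWeight (μ ^ k) : ℂ) * (1 - conj (μ ^ k) ^ d) := by
    have hconj : ∀ k ≤ n, μ ^ (n - k) = conj (μ ^ k) := fun k hk => by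
      rw [← inv_eq_conj (by simp [hμ1])]
      exact eq_inv_of_mul_eq_one_left (by rw [← pow_add, Nat.sub_add_cancel hk, hμ.pow_eq_one])
    have h := sum_Ico_reflect (fun k => (nodeWeight (μ ^ k) : ℂ) * (1 - (μ ^ k) ^ d)) 1
      (by omega : n ≤ n + 1)
    simp only [Nat.add_sub_cancel_left, Nat.add_sub_cancel] at h
    rw [← h]
    refine sum_congr rfl fun k hk => ?_
    rw [hconj k (by simp at hk; omega), nodeWeight_conj]
  have hsum := hμ.sum_geom_mul_conj_geom (ξ := 1) norm_one hd hd
  simp only [one_mul, min_self] at hsum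
  rw [range_eq_Ico, sum_eq_sum_Ico_succ_bot hn] at hsum
  have htwice : 2 * ∑ k ∈ Ico 1 n, (nodeWeight (μ ^ k) : ℂ) * (1 - (μ ^ k) ^ d)
      = 2 * ∑ k ∈ Ico 1 n, (∑ i ∈ range d, (μ ^ k) ^ i) * conj (∑ i ∈ range d, (μ ^ k) ^ i) := by
    rw [two_mul]
    nth_rw 2 [hreflect]
    rw [← sum_add_distrib, mul_sum]
    refine sum_congr rfl fun k hk => ?_
    rw [← mul_add]
    exact nodeWeight_mul_one_sub_pow_add_conj (by simp [hμ1])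
      (hμ.pow_ne_one_of_pos_of_lt (by simp at hk; omega) (by simp at hk; omega)) d
  simp only [pow_zero, one_pow, sum_const, card_range, nsmul_eq_mul, mul_one, map_natCast]
    at hsum
  linear_combination htwice / 2 + hsum

theorem conj_zpow_of_norm_eq_one (hx : ‖x‖ = 1) (m : ℤ) : conj (x ^ m) = x ^ (-m) := by
  rw [map_zpow₀, ← inv_eq_conj hx, inv_zpow']

theorem quadrature_zpow (hμ : IsPrimitiveRoot μ n) (hξ : ξ ^ n = -1) {d : ℤ} (hd : |d| ≤ n) :
    ∑ k ∈ range n, (nodeWeight (ξ * μ ^ k) : ℂ) * (ξ * μ ^ k) ^ d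
      + ∑ k ∈ Ico 1 n, (nodeWeight (μ ^ k) : ℂ) * (1 - (μ ^ k) ^ d) = n ^ 2 / 2 - d ^ 2 := by
  have hμ1 : ‖μ‖ = 1 := hμ.norm'_eq_one (by rintro rfl; norm_num at hξ)
  have hξ1 : ‖ξ‖ = 1 := norm_eq_one_of_pow_eq_neg_one hξ
  have hnat : ∀ m : ℕ, m ≤ n →
      ∑ k ∈ range n, (nodeWeight (ξ * μ ^ k) : ℂ) * (ξ * μ ^ k) ^ (m : ℤ)
        + ∑ k ∈ Ico 1 n, (nodeWeight (μ ^ k) : ℂ) * (1 - (μ ^ k) ^ (m : ℤ))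
        = n ^ 2 / 2 - (m : ℂ) ^ 2 := by
    intro m hm
    simp only [zpow_natCast]
    rw [sum_nodeWeight_mul_pow_of_pow_eq_neg_one hμ hξ hm, sum_nodeWeight_mul_one_sub_pow hμ hm]
    ring
  obtain ⟨m, rfl | rfl⟩ := Int.eq_nat_or_neg d
  · exact_mod_cast hnat m (by simpa using hd)
  · have hodd (k : ℕ) := conj_zpow_of_norm_eq_one (x := ξ * μ ^ k) (by simp [hμ1, hξ1]) m
    have heven (k : ℕ) := conj_zpow_of_norm_eq_one (x := μ ^ k) (by simp [hμ1]) m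
    have h := congrArg conj (hnat m (by simpa using hd))
    simp only [map_add, map_sum, map_mul, conj_ofReal, map_sub, map_one, map_div₀, map_pow,
      map_natCast, map_ofNat, hodd, heven] at h
    rw [Int.cast_neg, neg_sq, Int.cast_natCast]
    exact h

end Quadrature

theorem HasDerivAt.re {f : ℝ → ℂ} {f' : ℂ} {x : ℝ} (h : HasDerivAt f f' x) :
    HasDerivAt (fun t => (f t).re) f'.re x :=
  reCLM.hasFDerivAt.comp_hasDerivAt x h

theorem HasDerivAt.im {f : ℝ → ℂ} {f' : ℂ} {x : ℝ} (h : HasDerivAt f f' x) :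
    HasDerivAt (fun t => (f t).im) f'.im x :=
  imCLM.hasFDerivAt.comp_hasDerivAt x h

theorem hasDerivAt_exp_mul_I_zpow (m : ℤ) (θ : ℝ) :
    HasDerivAt (fun t : ℝ => exp (t * I) ^ m) (m * I * exp (θ * I) ^ m) θ := by
  simp_rw [← exp_int_mul]
  have h := ((hasDerivAt_id (θ : ℂ)).const_mul (m * I)).cexp.comp_ofReal
  simpa [mul_comm, mul_left_comm, mul_assoc] using h

noncomputable def trigSum {ι : Type*} (s : Finset ι) (c : ι → ℂ) (d : ι → ℤ) (θ : ℝ) : ℂ :=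
  ∑ i ∈ s, c i * exp (θ * I) ^ d i

section TrigSum
variable {ι : Type*} {s : Finset ι} {c : ι → ℂ} {d : ι → ℤ}

theorem hasDerivAt_trigSum (θ : ℝ) :
    HasDerivAt (trigSum s c d) (trigSum s (fun i => c i * (d i * I)) d θ) θ := by
  unfold trigSum
  convert HasDerivAt.fun_sum fun i _ => (hasDerivAt_exp_mul_I_zpow (d i) θ).const_mul (c i)
    using 1
  · ext t; simp
  · exact sum_congr rfl fun i _ => by ring

theorem trigSum_add (θ φ : ℝ) :
    trigSum s c d (θ + φ) = ∑ i ∈ s, c i * exp (θ * I) ^ d i * exp (φ * I) ^ d i := by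
  simp only [trigSum, ofReal_add, add_mul, exp_add, mul_zpow, mul_assoc]

theorem trigSum_quadrature {n : ℕ} (hd : ∀ i ∈ s, |d i| ≤ n) {α β : ℝ}
    (hα : exp (α * I) ^ n = -1) (hβ : IsPrimitiveRoot (exp (β * I)) n) (θ : ℝ) :
    trigSum s (fun i => c i * (d i * I) * (d i * I)) d θ + n ^ 2 / 2 * trigSum s c d θ
      = ∑ k ∈ range n, nodeWeight (exp ((α + k * β : ℝ) * I)) * trigSum s c d (θ + (α + k * β))
        + ∑ k ∈ Ico 1 n, nodeWeight (exp ((k * β : ℝ) * I))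
            * (trigSum s c d θ - trigSum s c d (θ + k * β)) := by
  have hnode : ∀ k : ℕ, exp ((α + k * β : ℝ) * I) = exp (α * I) * exp (β * I) ^ k := fun k => by
    rw [← exp_nat_mul, ← exp_add]; push_cast; ring_nf
  have hnode' : ∀ k : ℕ, exp ((k * β : ℝ) * I) = exp (β * I) ^ k := fun k => by
    rw [← exp_nat_mul]; push_cast; ring_nf
  simp only [trigSum_add, hnode, hnode']
  simp only [trigSum, mul_sum, ← sum_sub_distrib]
  rw [sum_comm, sum_comm (s := Ico 1 n), ← sum_add_distrib, ← sum_add_distrib]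
  refine sum_congr rfl fun i hi => ?_
  have hq := quadrature_zpow hβ hα (hd i hi)
  calc c i * (d i * I) * (d i * I) * exp (θ * I) ^ d i + n ^ 2 / 2 * (c i * exp (θ * I) ^ d i)
      = c i * exp (θ * I) ^ d i * (n ^ 2 / 2 - d i ^ 2) := by ring_nf; rw [I_sq]; ring
    _ = _ := by
      rw [← hq, mul_add, mul_sum, mul_sum]
      congr 1 <;> exact sum_congr rfl fun k _ => by ring

theorem neg_deriv_deriv_le_of_trigSum {n : ℕ} (hn : 0 < n) (hd : ∀ i ∈ s, |d i| ≤ n)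
    {f : ℝ → ℝ} (hf : ∀ θ, (f θ : ℂ) = trigSum s c d θ) (hf0 : ∀ θ, 0 ≤ f θ) {θ₀ : ℝ}
    (hmax : ∀ θ, f θ ≤ f θ₀) :
    -deriv (deriv f) θ₀ ≤ n ^ 2 / 2 * f θ₀ := by
  have hfre : f = fun θ => (trigSum s c d θ).re := funext fun θ => by rw [← hf, ofReal_re]
  have hf' : deriv f = fun θ => (trigSum s (fun i => c i * (d i * I)) d θ).re := by
    rw [hfre]; exact funext fun θ => (hasDerivAt_trigSum θ).re.deriv
  have hf'' : deriv (deriv f) θ₀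
      = (trigSum s (fun i => c i * (d i * I) * (d i * I)) d θ₀).re := by
    rw [hf']; exact (hasDerivAt_trigSum θ₀).re.deriv
  have hα : exp ((π / n : ℝ) * I) ^ n = -1 := by
    have hn' : (n : ℂ) ≠ 0 := by exact_mod_cast hn.ne'
    rw [← exp_nat_mul, ← exp_pi_mul_I]; congr 1; push_cast; field_simp
  have hβ : IsPrimitiveRoot (exp ((2 * π / n : ℝ) * I)) n := by
    convert isPrimitiveRoot_exp n hn.ne' using 2; push_cast; ring
  have hq := congrArg re (trigSum_quadrature (c := c) hd hα hβ θ₀)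
  simp only [← hf, add_re, re_sum, re_ofReal_mul, ← ofReal_sub, ofReal_re] at hq
  rw [show ((n : ℂ) ^ 2 / 2 * (f θ₀ : ℂ)) = ((n ^ 2 / 2 * f θ₀ : ℝ) : ℂ) by push_cast; ring,
    ofReal_re] at hq
  rw [hf'', neg_le_iff_add_nonneg', hq]
  exact add_nonneg (sum_nonneg fun k _ => mul_nonneg (nodeWeight_nonneg _) (hf0 _))
    (sum_nonneg fun k _ => mul_nonneg (nodeWeight_nonneg _) (sub_nonneg.2 (hmax _)))
end TrigSum

open Polynomial in
theorem normSq_eval_exp_mul_I_eq_trigSum (p : ℂ[X]) {n : ℕ} (hp : p.natDegree ≤ n) (θ : ℝ) :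
    (normSq (p.eval (exp (θ * I))) : ℂ)
      = trigSum (range (n + 1) ×ˢ range (n + 1)) (fun ab => p.coeff ab.1 * conj (p.coeff ab.2))
          (fun ab => (ab.1 : ℤ) - ab.2) θ := by
  have he : exp (θ * I) ≠ 0 := exp_ne_zero _
  rw [← mul_conj, eval_eq_sum_range' (Nat.lt_succ_of_le hp), map_sum, sum_mul_sum, trigSum,
    sum_product]
  refine sum_congr rfl fun a _ => sum_congr rfl fun b _ => ?_
  rw [map_mul, map_pow, ← inv_eq_conj (norm_exp_ofReal_mul_I θ), zpow_sub₀ he, zpow_natCast,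
    zpow_natCast, div_eq_mul_inv, inv_pow]
  ring

open Polynomial in
theorem Polynomial.neg_deriv_deriv_normSq_eval_exp_mul_I_le {p : ℂ[X]} {n : ℕ} (hn : 0 < n)
    (hp : p.natDegree ≤ n) {θ₀ : ℝ}
    (hmax : ∀ θ : ℝ, normSq (p.eval (exp (θ * I))) ≤ normSq (p.eval (exp (θ₀ * I)))) :
    -deriv (deriv fun θ : ℝ => normSq (p.eval (exp (θ * I)))) θ₀
      ≤ n ^ 2 / 2 * normSq (p.eval (exp (θ₀ * I))) := by
  refine neg_deriv_deriv_le_of_trigSum hn (fun ab hab => ?_)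
    (normSq_eval_exp_mul_I_eq_trigSum p hp) (fun θ => normSq_nonneg _) hmax
  simp only [mem_product, mem_range] at hab
  exact abs_sub_le_iff.2 ⟨by omega, by omega⟩

section Chord
variable {z : ℂ}

theorem normSq_exp_mul_I_sub (hz : ‖z‖ = 1) (θ : ℝ) :
    normSq (exp (θ * I) - z) = 2 - 2 * (exp (θ * I) * conj z).re := by
  rw [normSq_sub, normSq_eq_norm_sq, normSq_eq_norm_sq, norm_exp_ofReal_mul_I, hz]; ring

theorem hasDerivAt_exp_mul_I_mul (c : ℂ) (θ : ℝ) :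
    HasDerivAt (fun t : ℝ => exp (t * I) * c) (I * (exp (θ * I) * c)) θ := by
  simpa [mul_comm, mul_left_comm, mul_assoc] using (hasDerivAt_exp_mul_I_zpow 1 θ).mul_const c

theorem hasDerivAt_normSq_exp_mul_I_sub (hz : ‖z‖ = 1) (θ : ℝ) :
    HasDerivAt (fun t : ℝ => normSq (exp (t * I) - z)) (2 * (exp (θ * I) * conj z).im) θ := by
  have h := ((hasDerivAt_exp_mul_I_mul (conj z) θ).re.const_mul 2).const_sub 2
  simp_rw [← normSq_exp_mul_I_sub hz] at h
  exact h.congr_deriv (by rw [I_mul_re]; ring)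

theorem hasDerivAt_div_normSq_exp_mul_I_sub (hz : ‖z‖ = 1) {θ : ℝ} (hθ : exp (θ * I) ≠ z) :
    HasDerivAt (fun t : ℝ => 2 * (exp (t * I) * conj z).im / normSq (exp (t * I) - z))
      (-2 / normSq (exp (θ * I) - z)) θ := by
  set w := exp (θ * I) * conj z
  have hw := hasDerivAt_exp_mul_I_mul (conj z) θ
  have hu := hasDerivAt_normSq_exp_mul_I_sub hz θ
  have hw1 : w.re * w.re + w.im * w.im = 1 := by
    rw [← normSq_apply, normSq_mul, normSq_conj, normSq_eq_norm_sq, normSq_eq_norm_sq,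
      norm_exp_ofReal_mul_I, hz]; norm_num
  have hu0 : normSq (exp (θ * I) - z) ≠ 0 := normSq_eq_zero.not.2 (sub_ne_zero.2 hθ)
  refine ((hw.im.const_mul 2).div hu hu0).congr_deriv ?_
  have hre : normSq (exp (θ * I) - z) = 2 - 2 * w.re := normSq_exp_mul_I_sub hz θ
  rw [hre] at hu0 ⊢
  show (2 * (I * w).im * _ - 2 * w.im * (2 * w.im)) / _ ^ 2 = -2 / _
  rw [I_mul_im, div_eq_div_iff (pow_ne_zero 2 hu0) hu0]
  linear_combination (-4 * (2 - 2 * w.re)) * hw1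
end Chord

open Filter Topology in
theorem deriv_deriv_prod_normSq_exp_mul_I_sub {ι : Type*} [Fintype ι] {z : ι → ℂ}
    (hz : ∀ j, ‖z j‖ = 1) {θ₀ : ℝ} (hθ₀ : ∀ j, exp (θ₀ * I) ≠ z j)
    (hcrit : deriv (fun θ : ℝ => ∏ j, normSq (exp (θ * I) - z j)) θ₀ = 0) :
    deriv (deriv fun θ : ℝ => ∏ j, normSq (exp (θ * I) - z j)) θ₀
      = -2 * (∑ j, 1 / normSq (exp (θ₀ * I) - z j)) * ∏ j, normSq (exp (θ₀ * I) - z j) := by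
  classical
  set u : ι → ℝ → ℝ := fun j θ => normSq (exp (θ * I) - z j)
  set v : ι → ℝ → ℝ := fun j θ => 2 * (exp (θ * I) * conj (z j)).im
  have hu (j : ι) (θ : ℝ) : HasDerivAt (u j) (v j θ) θ := hasDerivAt_normSq_exp_mul_I_sub (hz j) θ
  have hf (θ : ℝ) :
      HasDerivAt (fun θ => ∏ j, u j θ) (∑ i, (∏ j ∈ univ.erase i, u j θ) * v i θ) θ := by
    simpa using HasDerivAt.fun_finsetProd (u := univ) fun i _ => hu i θ
  have hnear : ∀ᶠ θ in 𝓝 θ₀, ∀ j, u j θ ≠ 0 := eventually_all.2 fun j =>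
    (hu j θ₀).continuousAt.eventually_ne (normSq_eq_zero.not.2 (sub_ne_zero.2 (hθ₀ j)))
  have hlog : deriv (fun θ => ∏ j, u j θ) =ᶠ[𝓝 θ₀] fun θ => (∏ j, u j θ) * ∑ j, v j θ / u j θ :=
    hnear.mono fun θ hθ => by
      dsimp only
      rw [(hf θ).deriv, mul_sum]
      refine sum_congr rfl fun i _ => ?_
      rw [← mul_prod_erase univ (u · θ) (mem_univ i)]
      field_simp [hθ i]
  have hL : HasDerivAt (fun θ => ∑ j, v j θ / u j θ) (∑ j, -2 / u j θ₀) θ₀ :=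
    HasDerivAt.fun_sum fun j _ => hasDerivAt_div_normSq_exp_mul_I_sub (hz j) (hθ₀ j)
  rw [hlog.deriv_eq, (((hf θ₀).differentiableAt.hasDerivAt).fun_mul hL).deriv, hcrit]
  simp only [zero_mul, sum_const_zero, zero_add, mul_sum, sum_mul]
  exact sum_congr rfl fun j _ => by ring

theorem Continuous.exists_forall_le_comp_exp_mul_I {g : ℂ → ℝ} (hg : Continuous g) :
    ∃ θ₀ : ℝ, ∀ θ : ℝ, g (exp (θ * I)) ≤ g (exp (θ₀ * I)) := by
  obtain ⟨w, hw, hmax⟩ :=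
    (isCompact_sphere (0 : ℂ) 1).exists_isMaxOn ⟨1, by simp⟩ hg.continuousOn
  rw [mem_sphere_zero_iff_norm] at hw
  refine ⟨arg w, fun θ => ?_⟩
  rw [show exp (arg w * I) = w by simpa [hw] using norm_mul_exp_arg_mul_I w]
  exact hmax (by simp [norm_exp_ofReal_mul_I])

theorem exists_exp_mul_I_notMem (S : Finset ℂ) : ∃ θ : ℝ, exp (θ * I) ∉ S := by
  have hinj : Set.InjOn (fun θ : ℝ => exp (θ * I)) (Set.Ico 0 (2 * π)) := fun a ha b hb h =>
    Circle.exp_injOn_Ico (by simp) ha hb (Circle.ext h)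
  obtain ⟨_, ⟨θ, -, rfl⟩, hθ⟩ :=
    ((Set.Ico_infinite (by positivity)).image hinj).exists_notMem_finset S
  exact ⟨θ, hθ⟩

theorem exists_forall_prod_normSq_exp_mul_I_sub_le {ι : Type*} [Fintype ι] (z : ι → ℂ) :
    ∃ θ₀ : ℝ, (∀ θ : ℝ, ∏ j, normSq (exp (θ * I) - z j) ≤ ∏ j, normSq (exp (θ₀ * I) - z j))
      ∧ ∀ j, exp (θ₀ * I) ≠ z j := by
  classical
  obtain ⟨θ₀, hmax⟩ := Continuous.exists_forall_le_comp_exp_mul_I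
    (g := fun w => ∏ j, normSq (w - z j)) (by fun_prop)
  obtain ⟨θ₁, hθ₁⟩ := exists_exp_mul_I_notMem (univ.image z)
  have hpos : 0 < ∏ j, normSq (exp (θ₀ * I) - z j) := (hmax θ₁).trans_lt' <| prod_pos fun j _ =>
    normSq_pos.2 (sub_ne_zero.2 fun h => hθ₁ (h ▸ mem_image_of_mem z (mem_univ j)))
  exact ⟨θ₀, hmax, fun j h => hpos.ne' (prod_eq_zero (mem_univ j) (by rw [h, sub_self, map_zero]))⟩

/-- For any n points on the complex unit circle, there exists a point z₀ of modulus 1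
such that ∑ⱼ 1/|z₀ - zⱼ|² ≤ n²/4. -/
theorem chebyshev_L2_unit_circle (n : ℕ) (z : Fin n → ℂ)
    (hz : ∀ j, ‖z j‖ = 1) :
    ∃ z₀ : ℂ, ‖z₀‖ = 1 ∧
      ∑ j, 1 / ‖z₀ - z j‖ ^ 2 ≤ (n : ℝ) ^ 2 / 4 := by
  rcases n.eq_zero_or_pos with rfl | hn
  · exact ⟨1, by simp, by simp⟩
  obtain ⟨θ₀, hmax, hθ₀⟩ := exists_forall_prod_normSq_exp_mul_I_sub_le z
  set p : Polynomial ℂ := ∏ j, (Polynomial.X - Polynomial.C (z j))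
  have hp : p.natDegree ≤ n := by simp [p]
  have hf_poly (θ : ℝ) : ∏ j, normSq (exp (θ * I) - z j) = normSq (p.eval (exp (θ * I))) := by
    simp [p, Polynomial.eval_prod]
  have hbern := Polynomial.neg_deriv_deriv_normSq_eval_exp_mul_I_le hn hp
    (fun θ => by simpa only [hf_poly] using hmax θ)
  simp only [← hf_poly] at hbern
  rw [deriv_deriv_prod_normSq_exp_mul_I_sub hz hθ₀
    (IsLocalMax.deriv_eq_zero (Filter.Eventually.of_forall hmax))] at hbern
  have hpos : 0 < ∏ j, normSq (exp (θ₀ * I) - z j) :=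
    prod_pos fun j _ => normSq_pos.2 (sub_ne_zero.2 (hθ₀ j))
  refine ⟨exp (θ₀ * I), norm_exp_ofReal_mul_I θ₀, ?_⟩
  simp_rw [Complex.sq_norm]
  nlinarith
end

section
/- If z_1, ..., z_n are distinct points on the unit circle with z_j^n = c for a fixed c of modulus 1, and z_0 is the midpoint of an arc between two consecutive points (i.e., z_0^n = -c), then the sum over j of 1/|z_0 - z_j|^2 equals exactly n^2/4. -/
open Finset

private lemma geom_zero {x : ℂ} {n : ℕ} (h1 : x ^ n = 1) (h2 : x ≠ 1) :
    ∑ i ∈ Finset.range n, x ^ i = 0 := by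
  have h := geom_sum_mul x n
  rw [h1, sub_self] at h
  rcases mul_eq_zero.mp h with h | h
  · exact h
  · exact absurd (sub_eq_zero.mp h) h2

private lemma E_eval {n : ℕ} {ζ : ℂ} (hζ : IsPrimitiveRoot ζ n) (k : ℕ) :
    ∑ i ∈ Finset.range n, (ζ ^ k) ^ i = if n ∣ k then (n : ℂ) else 0 := by
  split_ifs with h
  · rw [(hζ.pow_eq_one_iff_dvd k).mpr h]
    simp
  · refine geom_zero ?_ fun hx => h ((hζ.pow_eq_one_iff_dvd k).mp hx)
    rw [← pow_mul, mul_comm, pow_mul, hζ.pow_eq_one, one_pow]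

private lemma sum_reindex {n : ℕ} (u v : Fin n → ℂ) (hu : Function.Injective u)
    (hv : Function.Injective v) (S : Finset ℂ) (hS : S.card ≤ n)
    (hu' : ∀ i, u i ∈ S) (hv' : ∀ i, v i ∈ S) (F : ℂ → ℝ) :
    ∑ i, F (u i) = ∑ i, F (v i) := by
  have key : ∀ w : Fin n → ℂ, Function.Injective w → (∀ i, w i ∈ S) →
      ∑ i, F (w i) = ∑ x ∈ S, F x := by
    intro w hw hw'
    have himg : Finset.image w Finset.univ = S := by
      apply Finset.eq_of_subset_of_card_le
      · intro x hx
        simp only [Finset.mem_image, Finset.mem_univ, true_and] at hx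
        obtain ⟨i, rfl⟩ := hx
        exact hw' i
      · rwa [Finset.card_image_of_injective _ hw, Finset.card_univ, Fintype.card_fin]
    rw [← himg, Finset.sum_image (fun a _ b _ h => hw h)]
  rw [key u hu hu', key v hv hv']

private lemma term_eval {n : ℕ} {w : ℂ} (hw : ‖w‖ = 1) (hwn : w ^ n = -1) :
    ((1 / ‖1 - w‖ ^ 2 : ℝ) : ℂ)
      = (∑ m ∈ Finset.range n, w ^ m) / 2 - (∑ m ∈ Finset.range n, w ^ m) ^ 2 / 4 := by
  set S := ∑ m ∈ Finset.range n, w ^ m with hSdef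
  have hmul : S * (w - 1) = -2 := by rw [hSdef, geom_sum_mul, hwn]; ring
  have hw1 : w ≠ 1 := by rintro rfl; norm_num at hmul
  have h1w : (1 : ℂ) - w ≠ 0 := sub_ne_zero.mpr (Ne.symm hw1)
  have hw0 : w ≠ 0 := fun h => by simp [h] at hw
  have hS : S = 2 / (1 - w) := by
    field_simp
    linear_combination -hmul
  have hconj : (starRingEnd ℂ) w = w⁻¹ := by
    have h : w * (starRingEnd ℂ) w = 1 := by
      rw [Complex.mul_conj]
      norm_cast
      rw [← Complex.sq_norm, hw]
      norm_num
    exact (inv_eq_of_mul_eq_one_right h).symm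
  have habs : ((‖1 - w‖ : ℝ) : ℂ) ^ 2 = (1 - w) * (1 - w⁻¹) := by
    rw [← Complex.ofReal_pow, Complex.sq_norm, ← Complex.mul_conj, map_sub, map_one, hconj]
  have h2 : (1 : ℂ) - w⁻¹ ≠ 0 := by
    intro h
    exact hw1 (inv_eq_one.mp (sub_eq_zero.mp h).symm)
  have hu2 : ((1 : ℂ) - w) ^ 2 ≠ 0 := pow_ne_zero _ h1w
  have hL : (1 - w) * (1 - w⁻¹) = -(1 - w) ^ 2 / w := by
    field_simp
    ring
  have target : 2 / (1 - w) / 2 - (2 / (1 - w)) ^ 2 / 4 = -w / (1 - w) ^ 2 := by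
    rw [div_pow, div_div, div_div,
      div_sub_div _ _ (mul_ne_zero h1w two_ne_zero) (mul_ne_zero hu2 (by norm_num : (4 : ℂ) ≠ 0)),
      div_eq_div_iff (mul_ne_zero (mul_ne_zero h1w two_ne_zero)
        (mul_ne_zero hu2 (by norm_num : (4 : ℂ) ≠ 0))) hu2]
    ring
  push_cast
  rw [habs, hS, hL, one_div_div, target, div_neg, neg_div]

/-- If z₁, …, zₙ are distinct points on the unit circle with zⱼⁿ = c for a fixed c of
modulus 1, and z₀ is a midpoint of an arc between consecutive points (z₀ⁿ = -c, |z₀| = 1),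
then ∑ⱼ 1/|z₀ - zⱼ|² = n²/4. -/
theorem chebyshev_L2_equality_case (n : ℕ) (z : Fin n → ℂ) (c : ℂ)
    (hinj : Function.Injective z) (hc : ‖c‖ = 1)
    (hzn : ∀ j, (z j) ^ n = c) (hz : ∀ j, ‖z j‖ = 1)
    (z₀ : ℂ) (hz₀ : ‖z₀‖ = 1) (hz₀n : z₀ ^ n = -c) :
    ∑ j, 1 / ‖z₀ - z j‖ ^ 2 = (n : ℝ) ^ 2 / 4 := by
  rcases Nat.eq_zero_or_pos n with rfl | hn
  · simp
  have hc0 : c ≠ 0 := fun h => by simp [h] at hc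
  have hz₀0 : z₀ ≠ 0 := fun h => by simp [h] at hz₀
  set a := z ⟨0, hn⟩ with ha
  have han : a ^ n = c := hzn ⟨0, hn⟩
  have ha0 : a ≠ 0 := fun h => hc0 (by rw [← han, h, zero_pow hn.ne'])
  obtain ⟨ζ, hζ⟩ : ∃ ζ : ℂ, IsPrimitiveRoot ζ n :=
    ⟨_, Complex.isPrimitiveRoot_exp n hn.ne'⟩
  have habsζ : ‖ζ‖ = 1 := by
    have h1 : ‖ζ‖ ^ n = 1 := by
      rw [← norm_pow, hζ.pow_eq_one, norm_one]
    rcases pow_eq_one_iff_cases.mp h1 with h | h | h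
    · omega
    · exact h
    · exact absurd h.1 (by have := norm_nonneg ζ; intro hh; rw [hh] at this; linarith)
  set g : Fin n → ℂ := fun i => a * ζ ^ (i : ℕ) with hg
  have hginj : Function.Injective g := by
    intro i j hij
    exact Fin.ext (hζ.pow_inj i.isLt j.isLt (mul_left_cancel₀ ha0 hij))
  have hgz : ∀ i : Fin n, (g i) ^ n = c := by
    intro i
    rw [hg]
    simp only
    rw [mul_pow, ← pow_mul, mul_comm (i : ℕ) n, pow_mul, hζ.pow_eq_one, one_pow, mul_one, han]
  have hroots : ∀ x : ℂ, x ^ n = c → x ∈ (Polynomial.nthRoots n c).toFinset := by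
    intro x hx
    rw [Multiset.mem_toFinset, Polynomial.mem_nthRoots hn]
    exact hx
  have hcard : ((Polynomial.nthRoots n c).toFinset).card ≤ n :=
    le_trans (Multiset.toFinset_card_le _) (by simpa using Polynomial.card_nthRoots n c)
  rw [sum_reindex z g hinj hginj _ hcard (fun i => hroots _ (hzn i))
    (fun i => hroots _ (hgz i)) (fun x => 1 / ‖z₀ - x‖ ^ 2)]
  -- pass to b = a / z₀
  set b : ℂ := a / z₀ with hb
  have hbn : b ^ n = -1 := by
    rw [hb, div_pow, han, hz₀n, div_neg, div_self hc0]
  have habsb : ‖b‖ = 1 := by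
    rw [hb, norm_div, ha, hz ⟨0, hn⟩, hz₀, div_one]
  have hw : ∀ i : Fin n, ‖b * ζ ^ (i : ℕ)‖ = 1 := by
    intro i
    rw [norm_mul, norm_pow, habsb, habsζ, one_pow, one_mul]
  have hwn : ∀ i : Fin n, (b * ζ ^ (i : ℕ)) ^ n = -1 := by
    intro i
    rw [mul_pow, ← pow_mul, mul_comm (i : ℕ) n, pow_mul, hζ.pow_eq_one, one_pow, mul_one, hbn]
  have habs_eq : ∀ i : Fin n, ‖z₀ - g i‖ = ‖1 - b * ζ ^ (i : ℕ)‖ := by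
    intro i
    have h : z₀ - g i = z₀ * (1 - b * ζ ^ (i : ℕ)) := by
      rw [hg]
      simp only
      rw [hb]
      field_simp
    rw [h, norm_mul, hz₀, one_mul]
  -- power sum computations
  have hA : ∑ i ∈ range n, ∑ m ∈ range n, (b * ζ ^ i) ^ m = (n : ℂ) := by
    rw [Finset.sum_comm]
    have h1 : ∀ m ∈ range n, ∑ i ∈ range n, (b * ζ ^ i) ^ m
        = if m = 0 then (n : ℂ) else 0 := by
      intro m hm
      have h2 : ∀ i, (b * ζ ^ i) ^ m = b ^ m * (ζ ^ m) ^ i := fun i => by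
        rw [mul_pow, ← pow_mul, mul_comm i m, pow_mul]
      rw [Finset.sum_congr rfl fun i _ => h2 i, ← Finset.mul_sum, E_eval hζ m]
      rcases eq_or_ne m 0 with rfl | hm0
      · simp
      · rw [if_neg (fun hd => hm0 (Nat.eq_zero_of_dvd_of_lt hd (mem_range.mp hm))),
          if_neg hm0, mul_zero]
    rw [Finset.sum_congr rfl h1, Finset.sum_ite_eq' (range n) 0 (fun _ => (n : ℂ)),
      if_pos (mem_range.mpr hn)]
  have hterm : ∀ i m k : ℕ, (b * ζ ^ i) ^ m * (b * ζ ^ i) ^ k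
      = b ^ (m + k) * (ζ ^ (m + k)) ^ i := fun i m k => by
    rw [← pow_add, mul_pow, ← pow_mul, mul_comm i (m + k), pow_mul]
  have hinner : ∀ m ∈ range n, ∑ k ∈ range n,
      (if n ∣ (m + k) then b ^ (m + k) * (n : ℂ) else 0)
      = if m = 0 then (n : ℂ) else -(n : ℂ) := by
    intro m hm
    rcases eq_or_ne m 0 with rfl | hm0
    · rw [if_pos rfl]
      rw [Finset.sum_eq_single_of_mem 0 (mem_range.mpr hn)]
      · simp
      · intro k hk hk0
        rw [if_neg]
        intro hd
        rw [zero_add] at hd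
        exact hk0 (Nat.eq_zero_of_dvd_of_lt hd (mem_range.mp hk))
    · rw [if_neg hm0]
      have hmn := mem_range.mp hm
      rw [Finset.sum_eq_single_of_mem (n - m) (mem_range.mpr (by omega))]
      · rw [show m + (n - m) = n from by omega, if_pos dvd_rfl, hbn]
        ring
      · intro k hk hkne
        rw [if_neg]
        intro hd
        have hkn := mem_range.mp hk
        have hle : n ≤ m + k := Nat.le_of_dvd (by omega) hd
        have hz' : m + k - n = 0 :=
          Nat.eq_zero_of_dvd_of_lt (Nat.dvd_sub hd dvd_rfl) (by omega)
        exact hkne (by omega)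
  have hB : ∑ i ∈ range n, (∑ m ∈ range n, (b * ζ ^ i) ^ m) ^ 2
      = 2 * (n : ℂ) - (n : ℂ) ^ 2 := by
    have step1 : ∑ i ∈ range n, (∑ m ∈ range n, (b * ζ ^ i) ^ m) ^ 2
        = ∑ m ∈ range n, ∑ k ∈ range n, ∑ i ∈ range n, b ^ (m + k) * (ζ ^ (m + k)) ^ i := by
      have e1 : ∑ i ∈ range n, (∑ m ∈ range n, (b * ζ ^ i) ^ m) ^ 2
          = ∑ i ∈ range n, ∑ m ∈ range n, ∑ k ∈ range n, b ^ (m + k) * (ζ ^ (m + k)) ^ i := by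
        refine Finset.sum_congr rfl fun i _ => ?_
        rw [sq, Finset.sum_mul_sum]
        exact Finset.sum_congr rfl fun m _ => Finset.sum_congr rfl fun k _ => hterm i m k
      rw [e1, Finset.sum_comm]
      exact Finset.sum_congr rfl fun m _ => Finset.sum_comm
    have step2 : ∑ m ∈ range n, ∑ k ∈ range n, ∑ i ∈ range n, b ^ (m + k) * (ζ ^ (m + k)) ^ i
        = ∑ m ∈ range n, ∑ k ∈ range n, (if n ∣ (m + k) then b ^ (m + k) * (n : ℂ) else 0) := by
      refine Finset.sum_congr rfl fun m _ => Finset.sum_congr rfl fun k _ => ?_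
      rw [← Finset.mul_sum, E_eval hζ (m + k)]
      split_ifs <;> simp
    rw [step1, step2, Finset.sum_congr rfl hinner]
    have e2 : ∀ m ∈ range n, (if m = 0 then (n : ℂ) else -(n : ℂ))
        = -(n : ℂ) + (if m = 0 then 2 * (n : ℂ) else 0) := by
      intro m _
      split_ifs <;> ring
    rw [Finset.sum_congr rfl e2, Finset.sum_add_distrib, Finset.sum_const, card_range,
      Finset.sum_ite_eq' (range n) 0 (fun _ => 2 * (n : ℂ)), if_pos (mem_range.mpr hn),
      nsmul_eq_mul]
    ring
  -- final assembly
  have main : ∑ i : Fin n, ((1 / ‖1 - b * ζ ^ (i : ℕ)‖ ^ 2 : ℝ) : ℂ)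
      = (n : ℂ) ^ 2 / 4 := by
    have h1 : ∀ i : Fin n, ((1 / ‖1 - b * ζ ^ (i : ℕ)‖ ^ 2 : ℝ) : ℂ)
        = (∑ m ∈ range n, (b * ζ ^ (i : ℕ)) ^ m) / 2
          - (∑ m ∈ range n, (b * ζ ^ (i : ℕ)) ^ m) ^ 2 / 4 :=
      fun i => term_eval (hw i) (hwn i)
    rw [Finset.sum_congr rfl fun i _ => h1 i, Finset.sum_sub_distrib,
      ← Finset.sum_div, ← Finset.sum_div,
      Fin.sum_univ_eq_sum_range (fun j => ∑ m ∈ range n, (b * ζ ^ j) ^ m) n,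
      Fin.sum_univ_eq_sum_range (fun j => (∑ m ∈ range n, (b * ζ ^ j) ^ m) ^ 2) n,
      hA, hB]
    ring
  apply Complex.ofReal_injective
  rw [Complex.ofReal_sum]
  calc ∑ i : Fin n, ((1 / ‖z₀ - g i‖ ^ 2 : ℝ) : ℂ)
      = ∑ i : Fin n, ((1 / ‖1 - b * ζ ^ (i : ℕ)‖ ^ 2 : ℝ) : ℂ) :=
        Finset.sum_congr rfl fun i _ => by rw [habs_eq i]
    _ = (n : ℂ) ^ 2 / 4 := main
    _ = (((n : ℝ) ^ 2 / 4 : ℝ) : ℂ) := by push_cast; ring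
end

section
/- For any real t with cos(nt) ≠ 1, the sum over j = 1 to n of 1/sin²(t/2 - jπ/n) equals 2n²/(1 - cos(nt)). -/
/-!
Put `w = e^{it}` and `μ = e^{2πi/n}`. Since `sin² θ = -(e^{2iθ} - 1)² / (4 e^{2iθ})`, the `j`-th term
is `-4 μʲ w / (w - μʲ)²` and the right-hand side is `-4 n² wⁿ / (wⁿ - 1)²`, so the claim is the
identity `∑ ζ w / (w - ζ)² = n² wⁿ / (wⁿ - 1)²` over the `n`-th roots of unity `ζ`. As
`ζ w / (w - ζ)² = w² / (w - ζ)² - w / (w - ζ)`, this follows from the partial-fraction expansions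
`∑ 1 / (w - ζ) = p' / p` and `∑ 1 / (w - ζ)² = (p'² - p p'') / p²` of `p = Xⁿ - 1`.
-/

open Real Polynomial Finset

theorem Finset.sum_Icc_one_eq_sum_range {M : Type*} [AddCommMonoid M] {f : ℕ → M} {n : ℕ}
    (hf : f n = f 0) : ∑ j ∈ Icc 1 n, f j = ∑ j ∈ range n, f j := by
  rw [← Ico_add_one_right_eq_Icc, sum_Ico_eq_sum_range, Nat.add_sub_cancel]
  simp_rw [add_comm 1]
  cases n with
  | zero => rfl
  | succ m => rw [sum_range_succ, sum_range_succ', hf]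

section LogDerivative

variable {K ι : Type*} [Field K] {w : K}

theorem eval_prod_X_sub_C_ne_zero {s : Finset ι} {a : ι → K} (hw : ∀ i ∈ s, w ≠ a i) :
    (∏ i ∈ s, (X - C (a i))).eval w ≠ 0 := by
  simpa [eval_prod, prod_ne_zero_iff, sub_ne_zero] using hw

theorem sum_inv_sub_eq_eval_derivative_div (s : Finset ι) (a : ι → K)
    (hw : ∀ i ∈ s, w ≠ a i) :
    ∑ i ∈ s, 1 / (w - a i) =
      (derivative (∏ i ∈ s, (X - C (a i)))).eval w / (∏ i ∈ s, (X - C (a i))).eval w := by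
  classical
  induction s using Finset.induction_on with
  | empty => simp
  | insert b s hb ih =>
    have hwb : w - a b ≠ 0 := sub_ne_zero.mpr (hw b (mem_insert_self b s))
    have hws : ∀ i ∈ s, w ≠ a i := fun i hi => hw i (mem_insert_of_mem hi)
    have hq := eval_prod_X_sub_C_ne_zero hws
    rw [sum_insert hb, prod_insert hb, ih hws]
    simp only [derivative_mul, derivative_sub, derivative_X, derivative_C, sub_zero, one_mul,
      eval_add, eval_mul, eval_sub, eval_X, eval_C]
    field_simp

theorem sum_inv_sub_sq_eq_eval_derivative_div (s : Finset ι) (a : ι → K)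
    (hw : ∀ i ∈ s, w ≠ a i) :
    ∑ i ∈ s, 1 / (w - a i) ^ 2 =
      let p := ∏ i ∈ s, (X - C (a i))
      ((derivative p).eval w ^ 2 - p.eval w * (derivative (derivative p)).eval w) /
        p.eval w ^ 2 := by
  classical
  induction s using Finset.induction_on with
  | empty => simp
  | insert b s hb ih =>
    have hwb : w - a b ≠ 0 := sub_ne_zero.mpr (hw b (mem_insert_self b s))
    have hws : ∀ i ∈ s, w ≠ a i := fun i hi => hw i (mem_insert_of_mem hi)
    have hq := eval_prod_X_sub_C_ne_zero hws
    rw [sum_insert hb, prod_insert hb, ih hws]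
    simp only [derivative_mul, derivative_add, derivative_sub, derivative_X, derivative_C,
      sub_zero, one_mul, eval_add, eval_mul, eval_sub, eval_X, eval_C]
    field_simp
    ring

end LogDerivative

theorem IsPrimitiveRoot.sum_pow_mul_div_sub_pow_sq {K : Type*} [Field K] {μ : K} {n : ℕ}
    (hμ : IsPrimitiveRoot μ n) {w : K} (hw : w ^ n ≠ 1) :
    ∑ j ∈ range n, μ ^ j * w / (w - μ ^ j) ^ 2 = n ^ 2 * w ^ n / (w ^ n - 1) ^ 2 := by
  have hn : 0 < n := Nat.pos_of_ne_zero (by rintro rfl; exact hw (pow_zero w))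
  have hroots : ∀ j ∈ range n, w ≠ μ ^ j := by
    rintro j - rfl
    rw [← pow_mul, mul_comm, pow_mul, hμ.pow_eq_one, one_pow] at hw
    exact hw rfl
  have hp : ∏ j ∈ range n, (X - C (μ ^ j)) = X ^ n - C 1 := by
    simpa using (X_pow_sub_C_eq_prod hμ hn (one_pow n)).symm
  have h1 := sum_inv_sub_eq_eval_derivative_div (range n) (μ ^ ·) hroots
  have h2 := sum_inv_sub_sq_eq_eval_derivative_div (range n) (μ ^ ·) hroots
  simp only [hp] at h1 h2
  have hsplit : ∑ j ∈ range n, μ ^ j * w / (w - μ ^ j) ^ 2 =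
      w ^ 2 * ∑ j ∈ range n, 1 / (w - μ ^ j) ^ 2 - w * ∑ j ∈ range n, 1 / (w - μ ^ j) := by
    rw [mul_sum, mul_sum, ← sum_sub_distrib]
    refine sum_congr rfl fun j hj => ?_
    have : w - μ ^ j ≠ 0 := sub_ne_zero.mpr (hroots j hj)
    field_simp
    ring
  have hw1 : w ^ n - 1 ≠ 0 := sub_ne_zero.mpr hw
  rw [hsplit, h1, h2]
  simp only [derivative_sub, derivative_X_pow, derivative_C, sub_zero, derivative_C_mul,
    eval_sub, eval_mul, eval_pow, eval_C, eval_X]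
  obtain rfl | ⟨m, rfl⟩ : n = 1 ∨ ∃ m, n = m + 2 := by
    rcases n with _ | _ | m <;> simp_all
  all_goals
    push_cast [Nat.add_sub_cancel]
    field_simp
    ring

-- Both sides vanish where `sin z = 0`.
theorem Complex.one_div_sin_sq (z : ℂ) :
    1 / sin z ^ 2 = -4 * exp (2 * z * I) / (exp (2 * z * I) - 1) ^ 2 := by
  have hsin : sin z ^ 2 = -(exp (2 * z * I) - 1) ^ 2 / (4 * exp (2 * z * I)) := by
    have hv : exp (z * I) ≠ 0 := exp_ne_zero _
    rw [sin, show -z * I = -(z * I) by ring, exp_neg, show 2 * z * I = z * I + z * I by ring,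
      exp_add]
    field_simp
    linear_combination 4 * (exp (z * I) ^ 2 - 1) ^ 2 * I_sq
  rw [hsin, one_div_div, div_neg, neg_mul, neg_div]

theorem div_div_sub_one_sq {K : Type*} [Field K] {ζ : K} (hζ : ζ ≠ 0) (w : K) :
    w / ζ / (w / ζ - 1) ^ 2 = ζ * w / (w - ζ) ^ 2 := by
  rw [div_sub_one hζ, div_pow, div_div_eq_mul_div]
  field_simp

theorem Complex.ofReal_one_div_sin_sq_half_sub (t x : ℝ) :
    ((1 / Real.sin (t / 2 - x / 2) ^ 2 : ℝ) : ℂ) =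
      -4 * (exp (x * I) * exp (t * I) / (exp (t * I) - exp (x * I)) ^ 2) := by
  have hexp : exp (2 * ↑(t / 2 - x / 2) * I) = exp (t * I) / exp (x * I) := by
    rw [← exp_sub]
    push_cast
    ring_nf
  rw [ofReal_div, ofReal_one, ofReal_pow, ofReal_sin, one_div_sin_sq, hexp, mul_div_assoc,
    div_div_sub_one_sq (exp_ne_zero _)]

theorem csc_sq_sum_identity_general (n : ℕ) (t : ℝ)
    (h : Real.cos (n * t) ≠ 1) :
    ∑ j ∈ Finset.Icc 1 n, 1 / Real.sin (t / 2 - (j : ℝ) * π / n) ^ 2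
      = 2 * (n : ℝ) ^ 2 / (1 - Real.cos (n * t)) := by
  have hn : n ≠ 0 := by rintro rfl; simp at h
  set μ := Complex.exp (2 * π * Complex.I / n)
  have hμ : IsPrimitiveRoot μ n := Complex.isPrimitiveRoot_exp n hn
  set w := Complex.exp (t * Complex.I)
  have hwn : Complex.exp ((n * t : ℝ) * Complex.I) = w ^ n := by
    rw [← Complex.exp_nat_mul]; push_cast; ring_nf
  have hw : w ^ n ≠ 1 := fun hw1 => h <| by
    rw [← Complex.exp_ofReal_mul_I_re, hwn, hw1, Complex.one_re]
  have hterm (j : ℕ) : ((1 / Real.sin (t / 2 - j * π / n) ^ 2 : ℝ) : ℂ) =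
      -4 * (μ ^ j * w / (w - μ ^ j) ^ 2) := by
    have hμj : Complex.exp ((2 * π * j / n : ℝ) * Complex.I) = μ ^ j := by
      rw [← Complex.exp_nat_mul]; push_cast; ring_nf
    rw [show t / 2 - j * π / n = t / 2 - (2 * π * j / n) / 2 by ring,
      Complex.ofReal_one_div_sin_sq_half_sub, hμj]
  have hrhs : 2 * (n : ℝ) ^ 2 / (1 - Real.cos (n * t)) =
      n ^ 2 * (1 / Real.sin (n * t / 2 - 0 / 2) ^ 2) := by
    rw [zero_div, sub_zero, sin_sq_eq_half_sub, mul_div_cancel₀ _ two_ne_zero]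
    field_simp
  apply Complex.ofReal_injective
  rw [Complex.ofReal_sum, sum_congr rfl fun j _ => hterm j,
    sum_Icc_one_eq_sum_range (by simp [hμ.pow_eq_one]), ← mul_sum,
    hμ.sum_pow_mul_div_sub_pow_sq hw, hrhs, Complex.ofReal_mul,
    Complex.ofReal_one_div_sin_sq_half_sub, hwn]
  push_cast [zero_mul, Complex.exp_zero]
  ring

/-- For any real t with cos(nt) ≠ 1, ∑_{j=1}^n 1/sin²(t/2 - jπ/n) = 2n²/(1 - cos(nt)). -/
theorem csc_sq_sum_identity (n : ℕ) (hn : 0 < n) (t : ℝ)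
    (h : Real.cos (n * t) ≠ 1) :
    ∑ j ∈ Finset.Icc 1 n, 1 / Real.sin (t / 2 - (j : ℝ) * π / n) ^ 2
      = 2 * (n : ℝ) ^ 2 / (1 - Real.cos (n * t)) :=
  csc_sq_sum_identity_general n t h
end

section
/- For any n points z_1, ..., z_n on the complex unit circle, there exists z_0 of modulus 1 such that the product over j of |z_0 - z_j| is at least 2; equivalently, the minimum over z ∈ T of the product of 1/|z - z_j| is at most 1/2. -/
/-!
Let `p = ∏ⱼ (X - zⱼ)` and `c = p(0) = ∏ⱼ (-zⱼ)`, so `|c| = 1`. Averaging `p` over the `n` solutions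
`x` of `xⁿ = c` kills every coefficient except those of degree `0` and `n`, which contribute
`c + xⁿ = 2c`. Hence `|p(x)| ≥ 2` at one of these points, and all of them lie on the unit circle.
-/

open Polynomial Finset

namespace IsPrimitiveRoot

variable {R : Type*} [CommRing R] [IsDomain R] {ω : R} {n : ℕ}

theorem geom_sum_pow_eq_zero (hω : IsPrimitiveRoot ω n) {m : ℕ} (hm₀ : m ≠ 0) (hmn : m < n) :
    ∑ k ∈ range n, (ω ^ m) ^ k = 0 := by
  have hne : ω ^ m - 1 ≠ 0 := sub_ne_zero.2 (hω.pow_ne_one_of_pos_of_lt hm₀ hmn)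
  refine (mul_eq_zero.1 ?_).resolve_left hne
  rw [mul_geom_sum, ← pow_mul, mul_comm, pow_mul, hω.pow_eq_one, one_pow, sub_self]

theorem sum_eval_mul_pow (hω : IsPrimitiveRoot ω n) {p : R[X]} (hp : p.natDegree ≤ n) (ζ : R) :
    ∑ k ∈ range n, p.eval (ζ * ω ^ k) = n * (p.coeff 0 + p.coeff n * ζ ^ n) := by
  calc ∑ k ∈ range n, p.eval (ζ * ω ^ k)
      = ∑ m ∈ range (n + 1), p.coeff m * ζ ^ m * ∑ k ∈ range n, (ω ^ m) ^ k := by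
        simp only [eval_eq_sum_range' (Nat.lt_succ_of_le hp), mul_sum]
        rw [sum_comm]
        refine sum_congr rfl fun m _ => sum_congr rfl fun k _ => ?_
        rw [mul_pow, ← pow_mul, ← pow_mul, mul_comm k m, mul_assoc]
    _ = n * (p.coeff 0 + p.coeff n * ζ ^ n) := by
        rw [sum_range_succ, hω.pow_eq_one, sum_eq_single 0]
        · simp only [pow_zero, mul_one, one_pow, sum_const, card_range, nsmul_eq_mul]
          ring
        · intro m hm hm₀
          rw [hω.geom_sum_pow_eq_zero hm₀ (mem_range.1 hm), mul_zero]
        · intro h0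
          simp_all

end IsPrimitiveRoot

theorem Polynomial.Monic.exists_pow_eq_coeff_zero_and_two_mul_norm_le {p : ℂ[X]} (hp : p.Monic)
    (hdeg : 0 < p.natDegree) :
    ∃ x : ℂ, x ^ p.natDegree = p.coeff 0 ∧ 2 * ‖p.coeff 0‖ ≤ ‖p.eval x‖ := by
  set n := p.natDegree
  obtain ⟨ζ, hζ⟩ := IsAlgClosed.exists_pow_nat_eq (p.coeff 0) hdeg
  obtain ⟨ω, hω⟩ : ∃ ω : ℂ, IsPrimitiveRoot ω n := ⟨_, Complex.isPrimitiveRoot_exp n hdeg.ne'⟩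
  have hsum : ∑ k ∈ range n, p.eval (ζ * ω ^ k) = n * (2 * p.coeff 0) := by
    rw [hω.sum_eval_mul_pow le_rfl, hζ, hp.coeff_natDegree]; ring
  obtain ⟨k, -, hk⟩ : ∃ k ∈ range n, 2 * ‖p.coeff 0‖ ≤ ‖p.eval (ζ * ω ^ k)‖ := by
    refine exists_le_of_sum_le (nonempty_range_iff.2 hdeg.ne') ?_
    calc ∑ _k ∈ range n, 2 * ‖p.coeff 0‖ = ‖∑ k ∈ range n, p.eval (ζ * ω ^ k)‖ := by
          rw [hsum, sum_const, card_range, nsmul_eq_mul, norm_mul, norm_mul, Complex.norm_natCast,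
            Complex.norm_ofNat]
      _ ≤ _ := norm_sum_le _ _
  refine ⟨_, ?_, hk⟩
  rw [mul_pow, ← pow_mul, mul_comm k, pow_mul, hω.pow_eq_one, one_pow, mul_one, hζ]

/-- For any n points z₁, …, zₙ on the unit circle there exists z₀ of modulus 1 with
∏ⱼ |z₀ - zⱼ| ≥ 2; equivalently ∏ⱼ 1/|z₀ - zⱼ| ≤ 1/2. -/
theorem chebyshev_L0_unit_circle (n : ℕ) (hn : 0 < n) (z : Fin n → ℂ)
    (hz : ∀ j, ‖z j‖ = 1) :
    ∃ z₀ : ℂ, ‖z₀‖ = 1 ∧ 2 ≤ ∏ j, ‖z₀ - z j‖ ∧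
      ∏ j, 1 / ‖z₀ - z j‖ ≤ 1 / 2 := by
  set p : ℂ[X] := ∏ j, (X - C (z j))
  have hdeg : p.natDegree = n := by simp [p]
  have hc : ‖p.coeff 0‖ = 1 := by simp [p, coeff_zero_eq_eval_zero, eval_prod, hz]
  have heval : ∀ x, ‖p.eval x‖ = ∏ j, ‖x - z j‖ := by simp [p, eval_prod]
  obtain ⟨x, hxn, hx⟩ :=
    (monic_prod_X_sub_C z univ).exists_pow_eq_coeff_zero_and_two_mul_norm_le (by simpa using hn)
  rw [hc, mul_one, heval] at hx
  have hx₁ : ‖x‖ = 1 := by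
    rw [hdeg] at hxn
    exact (pow_eq_one_iff_of_nonneg (norm_nonneg x) hn.ne').1 (by rw [← norm_pow, hxn, hc])
  refine ⟨x, hx₁, hx, ?_⟩
  simp only [one_div, prod_inv_distrib]
  exact inv_anti₀ two_pos hx
end

section
/- For p > 1 and any n points z_1, ..., z_n on the unit circle, there exists z_0 of modulus 1 such that Σ_j 1/|z_0 - z_j|^p ≤ (3e)^p · ζ(p) · n^p. -/
open Real Finset

/-!
Average over the `2n`-th roots of unity `w i`. Measured in units of the grid step, the angular
offsets of the grid points from a fixed `z j` are `1`-separated, and by Jordan's inequality a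
point at offset `x` satisfies `‖w i - z j‖ ≥ 4|x| / 2n`. For each `j` at most one grid point has
offset below `1/2`; discarding these leaves at least `n` points, on which at most two offsets from
any `z j` fall into each band `k + 1/2 ≤ |x| < k + 3/2`, so `∑ᵢ ‖w i - z j‖⁻ᵖ ≤ 2 ζ(p) nᵖ`. Summing
over `j` and averaging over the remaining grid points gives one with `∑ⱼ ‖w i - z j‖⁻ᵖ ≤ 2 ζ(p) nᵖ`,
and `2 ≤ (3e)ᵖ`.
-/

lemma norm_exp_ofReal_mul_I_sub_exp_ofReal_mul_I (a b : ℝ) :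
    ‖Complex.exp (a * Complex.I) - Complex.exp (b * Complex.I)‖ = 2 * |sin ((a - b) / 2)| := by
  have h : Complex.exp (a * Complex.I) - Complex.exp (b * Complex.I)
      = Complex.exp (b * Complex.I) * (Complex.exp (Complex.I * ↑(a - b)) - 1) := by
    rw [mul_sub, ← Complex.exp_add]
    push_cast
    ring_nf
  rw [h, norm_mul, Complex.norm_exp_ofReal_mul_I, one_mul, Complex.norm_exp_I_mul_ofReal_sub_one,
    norm_mul, Real.norm_two, Real.norm_eq_abs]

lemma two_mul_abs_sub_round_le_abs_sin_pi_mul (t : ℝ) : 2 * |t - round t| ≤ |sin (π * t)| := by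
  have hbound : |π * (t - round t)| ≤ π / 2 := by
    rw [abs_mul, abs_of_pos pi_pos]
    nlinarith [abs_sub_round t, pi_pos]
  calc 2 * |t - round t| = 2 / π * |π * (t - round t)| := by
        rw [abs_mul, abs_of_pos pi_pos]
        field_simp
    _ ≤ |sin (π * (t - round t))| := mul_abs_le_abs_sin hbound
    _ = |sin (π * t)| := by
        rw [show π * t = π * (t - round t) + round t * π by ring, sin_add_int_mul_pi, abs_mul,
          abs_zpow, abs_neg, abs_one, one_zpow, one_mul]

lemma four_mul_abs_sub_round_le_norm_exp_sub (t s : ℝ) :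
    4 * |t - s - round (t - s)|
      ≤ ‖Complex.exp (↑(2 * π * t) * Complex.I) - Complex.exp (↑(2 * π * s) * Complex.I)‖ := by
  rw [norm_exp_ofReal_mul_I_sub_exp_ofReal_mul_I,
    show (2 * π * t - 2 * π * s) / 2 = π * (t - s) by ring]
  linarith [two_mul_abs_sub_round_le_abs_sin_pi_mul (t - s)]

lemma summable_one_div_nat_add_one_rpow {p : ℝ} (hp : 1 < p) :
    Summable fun k : ℕ => 1 / ((k : ℝ) + 1) ^ p := by
  simpa using (summable_nat_add_iff 1).mpr (Real.summable_one_div_nat_rpow.mpr hp)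

section Separated

variable {ι : Type*} {x : ι → ℝ}

lemma card_filter_abs_lt_half_le_one (hx : ∀ i i', |x i - x i'| < 1 → i = i') (s : Finset ι) :
    #{i ∈ s | |x i| < 1 / 2} ≤ 1 := by
  rw [card_le_one]
  intro i hi i' hi'
  rw [mem_filter] at hi hi'
  exact hx i i' (by linarith [abs_sub (x i) (x i')])

lemma sum_le_tsum_of_injOn {g : ℕ → ℝ} (hg0 : ∀ k, 0 ≤ g k) (hg : Summable g) {K : ι → ℕ}
    {s : Finset ι} (hK : Set.InjOn K s) : ∑ i ∈ s, g (K i) ≤ ∑' k, g k := by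
  classical
  rw [← sum_image hK]
  exact hg.sum_le_tsum _ fun k _ => hg0 k

lemma injOn_floor_abs_sub_half (hx : ∀ i i', |x i - x i'| < 1 → i = i') {t : Set ι}
    (ht : ∀ i ∈ t, 1 / 2 ≤ |x i|) (hsign : ∀ i ∈ t, ∀ i' ∈ t, (0 ≤ x i ↔ 0 ≤ x i')) :
    Set.InjOn (fun i => ⌊|x i| - 1 / 2⌋₊) t := by
  intro i hi i' hi' hK
  have h1 := Nat.floor_le (sub_nonneg.mpr (ht i hi))
  have h2 := Nat.lt_floor_add_one (|x i| - 1 / 2)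
  have h1' := Nat.floor_le (sub_nonneg.mpr (ht i' hi'))
  have h2' := Nat.lt_floor_add_one (|x i'| - 1 / 2)
  simp only at hK
  rw [hK] at h1 h2
  apply hx
  rw [abs_lt]
  rcases le_or_gt 0 (x i) with hpos | hneg
  · rw [abs_of_nonneg hpos, abs_of_nonneg ((hsign i hi i' hi').mp hpos)] at *
    constructor <;> linarith
  · have hneg' : x i' < 0 := not_le.mp (mt (hsign i hi i' hi').mpr hneg.not_ge)
    rw [abs_of_neg hneg, abs_of_neg hneg'] at *
    constructor <;> linarith

lemma sum_one_div_two_mul_abs_rpow_le {p : ℝ} (hp : 1 < p)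
    (hx : ∀ i i', |x i - x i'| < 1 → i = i') {s : Finset ι} (hs : ∀ i ∈ s, 1 / 2 ≤ |x i|) :
    ∑ i ∈ s, 1 / (2 * |x i|) ^ p ≤ 2 * ∑' k : ℕ, 1 / ((k : ℝ) + 1) ^ p := by
  set g : ℕ → ℝ := fun k => 1 / ((k : ℝ) + 1) ^ p
  have hg0 : ∀ k, 0 ≤ g k := fun k => by positivity
  have hg := summable_one_div_nat_add_one_rpow hp
  set K : ι → ℕ := fun i => ⌊|x i| - 1 / 2⌋₊
  have hterm : ∀ i ∈ s, 1 / (2 * |x i|) ^ p ≤ g (K i) := by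
    intro i hi
    have hK : (K i : ℝ) + 1 ≤ 2 * |x i| := by
      linarith [Nat.floor_le (sub_nonneg.mpr (hs i hi)), hs i hi]
    exact one_div_le_one_div_of_le (by positivity) (by gcongr)
  have hs' (P : ι → Prop) [DecidablePred P] : ∀ i ∈ (↑{i ∈ s | P i} : Set ι), 1 / 2 ≤ |x i| :=
    fun i hi => hs i (mem_filter.mp hi).1
  calc ∑ i ∈ s, 1 / (2 * |x i|) ^ p ≤ ∑ i ∈ s, g (K i) := sum_le_sum hterm
    _ = ∑ i ∈ s with 0 ≤ x i, g (K i) + ∑ i ∈ s with ¬0 ≤ x i, g (K i) :=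
        (sum_filter_add_sum_filter_not _ _ _).symm
    _ ≤ ∑' k, g k + ∑' k, g k := by
        gcongr
        · refine sum_le_tsum_of_injOn hg0 hg (injOn_floor_abs_sub_half hx (hs' _) ?_)
          intro i hi i' hi'
          rw [mem_coe, mem_filter] at hi hi'
          exact iff_of_true hi.2 hi'.2
        · refine sum_le_tsum_of_injOn hg0 hg (injOn_floor_abs_sub_half hx (hs' _) ?_)
          intro i hi i' hi'
          rw [mem_coe, mem_filter] at hi hi'
          exact iff_of_false hi.2 hi'.2
    _ = 2 * ∑' k, g k := by ring

end Separated

/-- The angle `2π i / N` minus the angle `2π s`, reduced to `[-π, π]` and measured in units of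
`2π / N`. -/
noncomputable def gridOffset (N : ℕ) (s : ℝ) (i : Fin N) : ℝ :=
  N * ((i : ℝ) / N - s - round ((i : ℝ) / N - s))

lemma Fin.eq_of_abs_sub_sub_mul_lt_one {N : ℕ} {i i' : Fin N} {k : ℤ}
    (h : |(i : ℝ) - i' - N * k| < 1) : i = i' := by
  have hint : |(i : ℤ) - i' - N * k| < 1 := by exact_mod_cast h
  have hdvd : (N : ℤ) ∣ (i : ℤ) - i' := ⟨k, by rw [abs_lt] at hint; omega⟩
  have hlt : |(i : ℤ) - i'| < N := by rw [abs_lt]; omega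
  have := Int.eq_zero_of_abs_lt_dvd hdvd hlt
  exact Fin.ext (by omega)

section Grid

variable {N : ℕ}

lemma gridOffset_separated (s : ℝ) (i i' : Fin N)
    (h : |gridOffset N s i - gridOffset N s i'| < 1) : i = i' := by
  have hN : (N : ℝ) ≠ 0 := by exact_mod_cast i.pos.ne'
  refine Fin.eq_of_abs_sub_sub_mul_lt_one
    (k := round ((i : ℝ) / N - s) - round ((i' : ℝ) / N - s)) ?_
  convert h using 2
  simp only [gridOffset]
  field_simp
  push_cast
  ring

lemma four_mul_abs_gridOffset_div_le (s : ℝ) (i : Fin N) :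
    4 * |gridOffset N s i| / N
      ≤ ‖Complex.exp (↑(2 * π * (i / N)) * Complex.I)
          - Complex.exp (↑(2 * π * s) * Complex.I)‖ := by
  have hN : (0 : ℝ) < N := by exact_mod_cast i.pos
  rw [gridOffset, abs_mul, Nat.abs_cast, mul_left_comm, mul_div_cancel_left₀ _ hN.ne']
  exact four_mul_abs_sub_round_le_norm_exp_sub _ _

lemma sum_one_div_norm_exp_sub_rpow_le {p : ℝ} (hp : 1 < p) (s : ℝ) {G : Finset (Fin N)}
    (hG : ∀ i ∈ G, 1 / 2 ≤ |gridOffset N s i|) :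
    ∑ i ∈ G, 1 / ‖Complex.exp (↑(2 * π * (i / N)) * Complex.I)
        - Complex.exp (↑(2 * π * s) * Complex.I)‖ ^ p
      ≤ 2 * ((N : ℝ) / 2) ^ p * ∑' k : ℕ, 1 / ((k : ℝ) + 1) ^ p := by
  have hterm : ∀ i ∈ G, 1 / ‖Complex.exp (↑(2 * π * (i / N)) * Complex.I)
        - Complex.exp (↑(2 * π * s) * Complex.I)‖ ^ p
      ≤ ((N : ℝ) / 2) ^ p * (1 / (2 * |gridOffset N s i|) ^ p) := by
    intro i hi
    have hN : (0 : ℝ) < N := by exact_mod_cast i.pos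
    have hx : 0 < 2 * |gridOffset N s i| := by linarith [hG i hi]
    have hchord := four_mul_abs_gridOffset_div_le s i
    calc _ ≤ 1 / (2 * |gridOffset N s i| / (N / 2)) ^ p := by
          gcongr
          convert hchord using 1
          ring
      _ = _ := by rw [div_rpow hx.le (by positivity)]; field_simp
  calc _ ≤ ∑ i ∈ G, ((N : ℝ) / 2) ^ p * (1 / (2 * |gridOffset N s i|) ^ p) := sum_le_sum hterm
    _ = ((N : ℝ) / 2) ^ p * ∑ i ∈ G, 1 / (2 * |gridOffset N s i|) ^ p := (mul_sum _ _ _).symm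
    _ ≤ ((N : ℝ) / 2) ^ p * (2 * ∑' k : ℕ, 1 / ((k : ℝ) + 1) ^ p) := by
        gcongr
        exact sum_one_div_two_mul_abs_rpow_le hp (gridOffset_separated s) hG
    _ = _ := by ring

end Grid

theorem exists_norm_eq_one_sum_one_div_norm_sub_rpow_le_two_mul {n : ℕ} (hn : 0 < n) {p : ℝ}
    (hp : 1 < p) (z : Fin n → ℂ) (hz : ∀ j, ‖z j‖ = 1) :
    ∃ z₀ : ℂ, ‖z₀‖ = 1 ∧
      ∑ j, 1 / ‖z₀ - z j‖ ^ p ≤ 2 * (∑' k : ℕ, 1 / ((k : ℝ) + 1) ^ p) * (n : ℝ) ^ p := by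
  classical
  set T := ∑' k : ℕ, 1 / ((k : ℝ) + 1) ^ p
  set s : Fin n → ℝ := fun j => (z j).arg / (2 * π)
  have hzs : ∀ j, z j = Complex.exp (↑(2 * π * s j) * Complex.I) := by
    intro j
    rw [show 2 * π * s j = (z j).arg by simp only [s]; field_simp]
    simpa [hz j] using (Complex.norm_mul_exp_arg_mul_I (z j)).symm
  set w : Fin (2 * n) → ℂ := fun i => Complex.exp (↑(2 * π * (i / (2 * n : ℕ))) * Complex.I)
  -- Each `z j` lies within half a grid step of at most one grid point; discard those.
  set bad : Finset (Fin (2 * n)) :=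
    univ.biUnion fun j => {i | |gridOffset (2 * n) (s j) i| < 1 / 2}
  set good := badᶜ
  have hbad : #bad ≤ n := by
    calc #bad ≤ ∑ j, #{i | |gridOffset (2 * n) (s j) i| < 1 / 2} := card_biUnion_le
      _ ≤ ∑ _j : Fin n, 1 :=
          sum_le_sum fun j _ => card_filter_abs_lt_half_le_one (gridOffset_separated _) _
      _ = n := by simp
  have hgood : n ≤ #good := by rw [card_compl, Fintype.card_fin]; omega
  have hgood_offset : ∀ j, ∀ i ∈ good, 1 / 2 ≤ |gridOffset (2 * n) (s j) i| := by
    intro j i hi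
    simp only [good, bad, mem_compl, mem_biUnion, mem_filter, not_exists, not_and, not_lt] at hi
    exact hi j (mem_univ _) (mem_univ _)
  have hsum : ∑ i ∈ good, ∑ j, 1 / ‖w i - z j‖ ^ p ≤ ∑ _i ∈ good, 2 * T * (n : ℝ) ^ p := by
    rw [sum_comm]
    have hN : ((2 * n : ℕ) : ℝ) / 2 = n := by push_cast; ring
    calc ∑ j, ∑ i ∈ good, 1 / ‖w i - z j‖ ^ p ≤ ∑ _j : Fin n, 2 * ((2 * n : ℕ) / 2 : ℝ) ^ p * T :=
          sum_le_sum fun j _ => by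
            rw [hzs j]
            exact sum_one_div_norm_exp_sub_rpow_le hp _ (hgood_offset j)
      _ = n * (2 * T * (n : ℝ) ^ p) := by
          rw [hN, sum_const, card_univ, Fintype.card_fin, nsmul_eq_mul]
          ring
      _ ≤ #good * (2 * T * (n : ℝ) ^ p) := by gcongr
      _ = ∑ _i ∈ good, 2 * T * (n : ℝ) ^ p := by simp
  obtain ⟨i, -, hi⟩ := exists_le_of_sum_le (card_pos.mp (by omega)) hsum
  exact ⟨w i, Complex.norm_exp_ofReal_mul_I _, hi⟩

/-- For p > 1 and n points on the unit circle, there exists z₀ of modulus 1 with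
∑ⱼ 1/|z₀ - zⱼ|ᵖ ≤ (3e)ᵖ·ζ(p)·nᵖ, where ζ(p) = ∑_{k≥1} 1/kᵖ. -/
theorem chebyshev_Lp_upper_bound_p_gt_one (n : ℕ) (p : ℝ) (hp : 1 < p)
    (z : Fin n → ℂ) (hz : ∀ j, ‖z j‖ = 1) :
    ∃ z₀ : ℂ, ‖z₀‖ = 1 ∧
      ∑ j, 1 / ‖z₀ - z j‖ ^ p
        ≤ (3 * Real.exp 1) ^ p * (∑' k : ℕ, 1 / ((k : ℝ) + 1) ^ p) * (n : ℝ) ^ p := by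
  rcases n.eq_zero_or_pos with rfl | hn
  · exact ⟨1, by simp, by simp [zero_rpow (by linarith : p ≠ 0)]⟩
  obtain ⟨z₀, hz₀, hsum⟩ := exists_norm_eq_one_sum_one_div_norm_sub_rpow_le_two_mul hn hp z hz
  have htwo : 2 ≤ (3 * Real.exp 1) ^ p := by
    have he : 2 ≤ Real.exp 1 := by linarith [add_one_le_exp 1]
    linarith [self_le_rpow_of_one_le (by linarith : 1 ≤ 3 * Real.exp 1) hp.le]
  refine ⟨z₀, hz₀, hsum.trans ?_⟩
  have hT : 0 ≤ ∑' k : ℕ, 1 / ((k : ℝ) + 1) ^ p := tsum_nonneg fun k => by positivity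
  gcongr
end

section
/- For 0 < p < 1 and any n points z_1, ..., z_n on the unit circle, there exists z_0 of modulus 1 such that Σ_j 1/|z_0 - z_j|^p ≤ (3e)^p · (n/(1-p) - p/(1-p)). -/
/-!
Averaging over the unit circle: the mean of `z ↦ ∑ⱼ |z - zⱼ|⁻ᵖ` is `n` times the mean of
`z ↦ |z - 1|⁻ᵖ` by rotation invariance, and Jordan's inequality `|e^{iθ} - 1| = 2|sin(θ/2)| ≥ 2θ/π`
on `[0, π]` bounds the latter by `2⁻ᵖ/(1 - p)`. Some point of the circle lies below the mean, and
`n/(2ᵖ(1 - p)) ≤ (3e)ᵖ(n - p)/(1 - p)` for `n ≥ 2` because `(6e)ᵖ ≥ eᵖ ≥ 1 + p`. For `n = 1` the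
antipode of `z₁` does better.
-/

open Real MeasureTheory intervalIntegral Metric Set

lemma exists_circleMap_eq_of_norm_eq_one {w : ℂ} (hw : ‖w‖ = 1) : ∃ ζ, circleMap 0 1 ζ = w := by
  rw [← Set.mem_range, range_circleMap]
  simpa using hw

theorem CircleIntegrable.comp_mul_left {E : Type*} [NormedAddCommGroup E] {f : ℂ → E} {R : ℝ}
    (hf : CircleIntegrable f 0 R) {w : ℂ} (hw : ‖w‖ = 1) :
    CircleIntegrable (fun z ↦ f (w * z)) 0 R := by
  obtain ⟨ζ, rfl⟩ := exists_circleMap_eq_of_norm_eq_one hw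
  have hper : Function.Periodic (fun θ ↦ f (circleMap 0 R θ)) (2 * π) :=
    fun θ ↦ by simp [periodic_circleMap 0 R θ]
  simpa [CircleIntegrable, circleMap_zero_mul] using
    (hper.intervalIntegrable₀ two_pi_pos.ne' hf (ζ + 0) (ζ + 2 * π)).comp_add_left ζ

namespace Real

theorem exists_le_circleAverage {f : ℂ → ℝ} {c : ℂ} {R : ℝ} (hf : CircleIntegrable f c R) :
    ∃ z ∈ sphere c |R|, f z ≤ circleAverage f c R := by
  rw [circleAverage_eq_intervalAverage]
  obtain ⟨θ, -, hθ⟩ := exists_le_setAverage (by simp [pi_pos.ne']) (by simp [ENNReal.mul_eq_top])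
    (intervalIntegrable_iff.1 hf)
  exact ⟨circleMap c R θ, circleMap_mem_sphere' c R θ, hθ⟩

theorem circleAverage_comp_mul_left {E : Type*} [NormedAddCommGroup E] [NormedSpace ℝ E]
    {f : ℂ → E} {R : ℝ} {w : ℂ} (hw : ‖w‖ = 1) :
    circleAverage (fun z ↦ f (w * z)) 0 R = circleAverage f 0 R := by
  obtain ⟨ζ, rfl⟩ := exists_circleMap_eq_of_norm_eq_one hw
  rw [circleAverage_eq_integral_add ζ (f := f)]
  simp only [circleAverage, circleMap_zero_mul, one_mul, add_comm]

end Real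

lemma norm_circleMap_zero_one_sub_one (θ : ℝ) : ‖circleMap 0 1 θ - 1‖ = 2 * |sin (θ / 2)| := by
  simpa [circleMap, mul_comm, abs_mul] using Complex.norm_exp_I_mul_ofReal_sub_one θ

lemma IntervalIntegrable.of_reflect {f : ℝ → ℝ} {m : ℝ}
    (hf : ∀ x, f (2 * m - x) = f x) (hint : IntervalIntegrable f volume 0 m) :
    IntervalIntegrable f volume m (2 * m) := by
  have h := (hint.comp_sub_left (2 * m)).symm
  rw [show 2 * m - m = m by ring, sub_zero] at h
  simpa only [hf] using h

lemma integral_zero_two_mul_of_reflect {f : ℝ → ℝ} {m : ℝ}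
    (hf : ∀ x, f (2 * m - x) = f x) (hint : IntervalIntegrable f volume 0 m) :
    ∫ x in 0..2 * m, f x = 2 * ∫ x in 0..m, f x := by
  have hright : ∫ x in m..2 * m, f x = ∫ x in 0..m, f x := by
    have := integral_comp_sub_left f (2 * m) (a := m) (b := 2 * m)
    rw [show 2 * m - m = m by ring, sub_self] at this
    simpa only [hf] using this
  rw [← integral_add_adjacent_intervals hint (hint.of_reflect hf), hright]
  ring

lemma one_div_norm_circleMap_sub_one_rpow_two_pi_sub (p θ : ℝ) :
    1 / ‖circleMap 0 1 (2 * π - θ) - 1‖ ^ p = 1 / ‖circleMap 0 1 θ - 1‖ ^ p := by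
  rw [norm_circleMap_zero_one_sub_one, norm_circleMap_zero_one_sub_one,
    show (2 * π - θ) / 2 = π - θ / 2 by ring, sin_pi_sub]

lemma one_div_norm_sub_rpow_eq_comp_inv_mul (p : ℝ) {w : ℂ} (hw : ‖w‖ = 1) :
    (fun z ↦ 1 / ‖z - w‖ ^ p) = fun z ↦ 1 / ‖w⁻¹ * z - 1‖ ^ p := by
  have hw0 : w ≠ 0 := norm_ne_zero_iff.1 (by simp [hw])
  ext z
  rw [show w⁻¹ * z - 1 = w⁻¹ * (z - w) by field_simp, norm_mul, norm_inv, hw, inv_one, one_mul]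

section Kernel

variable {p : ℝ}

lemma one_div_norm_circleMap_sub_one_rpow_le (hp : 0 ≤ p) {θ : ℝ} (hθ : θ ∈ Ioc 0 π) :
    1 / ‖circleMap 0 1 θ - 1‖ ^ p ≤ (π / 2) ^ p * θ ^ (-p) := by
  obtain ⟨hθ0, hθπ⟩ := hθ
  have jordan : 2 / π * θ ≤ 2 * |sin (θ / 2)| := by
    have := mul_le_sin (x := θ / 2) (by positivity) (by linarith)
    have := le_abs_self (sin (θ / 2))
    linarith [show 2 / π * θ = 2 * (2 / π * (θ / 2)) by ring]
  calc 1 / ‖circleMap 0 1 θ - 1‖ ^ p ≤ 1 / (2 / π * θ) ^ p := by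
        rw [norm_circleMap_zero_one_sub_one]
        gcongr
    _ = (π / 2) ^ p * θ ^ (-p) := by
        rw [mul_rpow (by positivity) hθ0.le, rpow_neg hθ0.le, div_rpow (by norm_num) pi_pos.le,
          div_rpow pi_pos.le (by norm_num)]
        field_simp

lemma intervalIntegrable_one_div_norm_circleMap_sub_one_rpow (hp0 : 0 ≤ p) (hp1 : p < 1) :
    IntervalIntegrable (fun θ ↦ 1 / ‖circleMap 0 1 θ - 1‖ ^ p) volume 0 π := by
  refine ((intervalIntegrable_rpow' (r := -p) (by linarith)).const_mul ((π / 2) ^ p)).mono_fun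
    (Measurable.aestronglyMeasurable (by fun_prop)) ?_
  rw [uIoc_of_le pi_pos.le]
  refine (ae_restrict_iff' measurableSet_Ioc).2 (.of_forall fun θ hθ ↦ ?_)
  simp only [norm_of_nonneg (by positivity : (0:ℝ) ≤ 1 / ‖circleMap 0 1 θ - 1‖ ^ p),
    norm_of_nonneg (by have := hθ.1; positivity : (0:ℝ) ≤ (π / 2) ^ p * θ ^ (-p))]
  exact one_div_norm_circleMap_sub_one_rpow_le hp0 hθ

theorem circleIntegrable_one_div_norm_sub_one_rpow (hp0 : 0 ≤ p) (hp1 : p < 1) :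
    CircleIntegrable (fun z ↦ 1 / ‖z - 1‖ ^ p) 0 1 :=
  have hint := intervalIntegrable_one_div_norm_circleMap_sub_one_rpow hp0 hp1
  hint.trans (hint.of_reflect (one_div_norm_circleMap_sub_one_rpow_two_pi_sub p))

theorem circleAverage_one_div_norm_sub_one_rpow_le (hp0 : 0 ≤ p) (hp1 : p < 1) :
    circleAverage (fun z ↦ 1 / ‖z - 1‖ ^ p) 0 1 ≤ 1 / (2 ^ p * (1 - p)) := by
  have hint := intervalIntegrable_one_div_norm_circleMap_sub_one_rpow hp0 hp1
  have hhalf : ∫ θ in 0..π, 1 / ‖circleMap 0 1 θ - 1‖ ^ p ≤ π / (2 ^ p * (1 - p)) :=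
    calc ∫ θ in 0..π, 1 / ‖circleMap 0 1 θ - 1‖ ^ p ≤ ∫ θ in 0..π, (π / 2) ^ p * θ ^ (-p) :=
          integral_mono_on_of_le_Ioo pi_pos.le hint
            ((intervalIntegrable_rpow' (r := -p) (by linarith)).const_mul _)
            fun θ hθ ↦ one_div_norm_circleMap_sub_one_rpow_le hp0 (Ioo_subset_Ioc_self hθ)
      _ = π / (2 ^ p * (1 - p)) := by
          rw [intervalIntegral.integral_const_mul, integral_rpow (.inl (by linarith)),
            zero_rpow (by linarith), div_rpow pi_pos.le (by norm_num), rpow_add pi_pos,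
            rpow_neg pi_pos.le, rpow_one]
          field_simp
          ring
  rw [circleAverage_def, smul_eq_mul,
    integral_zero_two_mul_of_reflect (one_div_norm_circleMap_sub_one_rpow_two_pi_sub p) hint]
  calc (2 * π)⁻¹ * (2 * ∫ θ in 0..π, 1 / ‖circleMap 0 1 θ - 1‖ ^ p)
      ≤ (2 * π)⁻¹ * (2 * (π / (2 ^ p * (1 - p)))) := by gcongr
    _ = 1 / (2 ^ p * (1 - p)) := by field_simp

theorem circleIntegrable_one_div_norm_sub_rpow (hp0 : 0 ≤ p) (hp1 : p < 1) {w : ℂ}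
    (hw : ‖w‖ = 1) : CircleIntegrable (fun z ↦ 1 / ‖z - w‖ ^ p) 0 1 := by
  rw [one_div_norm_sub_rpow_eq_comp_inv_mul p hw]
  exact (circleIntegrable_one_div_norm_sub_one_rpow hp0 hp1).comp_mul_left (by simp [hw])

theorem circleAverage_one_div_norm_sub_rpow {w : ℂ} (hw : ‖w‖ = 1) :
    circleAverage (fun z ↦ 1 / ‖z - w‖ ^ p) 0 1 = circleAverage (fun z ↦ 1 / ‖z - 1‖ ^ p) 0 1 := by
  rw [one_div_norm_sub_rpow_eq_comp_inv_mul p hw]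
  exact circleAverage_comp_mul_left (f := fun z ↦ 1 / ‖z - 1‖ ^ p) (by simp [hw])

theorem exists_norm_eq_one_sum_one_div_norm_sub_rpow_le {ι : Type*} [Fintype ι]
    (hp0 : 0 ≤ p) (hp1 : p < 1) (z : ι → ℂ) (hz : ∀ j, ‖z j‖ = 1) :
    ∃ z₀ : ℂ, ‖z₀‖ = 1 ∧
      ∑ j, 1 / ‖z₀ - z j‖ ^ p ≤ Fintype.card ι / (2 ^ p * (1 - p)) := by
  have hint : ∀ j ∈ Finset.univ, CircleIntegrable (fun w ↦ 1 / ‖w - z j‖ ^ p) 0 1 :=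
    fun j _ ↦ circleIntegrable_one_div_norm_sub_rpow hp0 hp1 (hz j)
  obtain ⟨z₀, hz₀, hle⟩ := exists_le_circleAverage
    (CircleIntegrable.fun_sum Finset.univ (f := fun j w ↦ 1 / ‖w - z j‖ ^ p) hint)
  refine ⟨z₀, by simpa using hz₀, hle.trans ?_⟩
  rw [circleAverage_fun_sum hint]
  simp only [circleAverage_one_div_norm_sub_rpow (hz _)]
  rw [Finset.sum_const, Finset.card_univ, nsmul_eq_mul, ← mul_one_div]
  gcongr
  exact circleAverage_one_div_norm_sub_one_rpow_le hp0 hp1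

end Kernel

lemma div_two_rpow_mul_one_sub_le {n p : ℝ} (hn : 2 ≤ n) (hp0 : 0 ≤ p) (hp1 : p < 1) :
    n / (2 ^ p * (1 - p)) ≤ (3 * exp 1) ^ p * (n / (1 - p) - p / (1 - p)) := by
  have hgrowth : 1 + p ≤ 2 ^ p * (3 * exp 1) ^ p := by
    rw [← mul_rpow (by norm_num) (by positivity)]
    calc 1 + p ≤ exp p := by linarith [add_one_le_exp p]
      _ = exp 1 ^ p := (exp_one_rpow p).symm
      _ ≤ (2 * (3 * exp 1)) ^ p := by gcongr; linarith [exp_pos 1]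
  have h1p : 0 < 1 - p := by linarith
  rw [div_le_iff₀ (by positivity)]
  calc n ≤ (1 + p) * (n - p) := by nlinarith
    _ ≤ 2 ^ p * (3 * exp 1) ^ p * (n - p) := by gcongr; linarith
    _ = _ := by field_simp

lemma one_div_norm_neg_sub_rpow_le_one {p : ℝ} (hp : 0 ≤ p) {w : ℂ} (hw : ‖w‖ = 1) :
    1 / ‖-w - w‖ ^ p ≤ 1 := by
  rw [show -w - w = -(2 * w) by ring, norm_neg, norm_mul, hw, Complex.norm_two, mul_one]
  exact div_le_one_of_le₀ (one_le_rpow (by norm_num) hp) (by positivity)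

/-- For 0 < p < 1 and n points on the unit circle, there exists z₀ of modulus 1 with
∑ⱼ 1/|z₀ - zⱼ|ᵖ ≤ (3e)ᵖ·(n/(1-p) - p/(1-p)). -/
theorem chebyshev_Lp_upper_bound_p_lt_one (n : ℕ) (hn : 0 < n) (p : ℝ)
    (hp0 : 0 < p) (hp1 : p < 1)
    (z : Fin n → ℂ) (hz : ∀ j, ‖z j‖ = 1) :
    ∃ z₀ : ℂ, ‖z₀‖ = 1 ∧
      ∑ j, 1 / ‖z₀ - z j‖ ^ p
        ≤ (3 * Real.exp 1) ^ p * ((n : ℝ) / (1 - p) - p / (1 - p)) := by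
  rcases (show n = 1 ∨ 2 ≤ n by omega) with rfl | hn2
  · refine ⟨-z 0, by rw [norm_neg, hz], ?_⟩
    rw [Fin.sum_univ_one, Nat.cast_one, div_sub_div_same, div_self (by linarith), mul_one]
    exact (one_div_norm_neg_sub_rpow_le_one hp0.le (hz 0)).trans
      (one_le_rpow (by linarith [add_one_le_exp 1]) hp0.le)
  · obtain ⟨z₀, hz₀, hle⟩ := exists_norm_eq_one_sum_one_div_norm_sub_rpow_le hp0.le hp1 z hz
    refine ⟨z₀, hz₀, hle.trans ?_⟩
    simpa using div_two_rpow_mul_one_sub_le (by exact_mod_cast hn2) hp0.le hp1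
end

section
/- Let q(z) = ∏_{j=1}^n (z - z_j) with |z_j| = 1 for all j, and let z_0 on the unit circle be a point where |q| attains its maximum over the unit circle. Then for every r > 0, the number of indices j with z_j on the arc {z_0·e^{iρ} : ρ ∈ [-r, r]} is at most e·n·r. -/
/-!
Put `δ = e r` and `p = (1 + δ) z₀`. The maximum modulus principle, applied on the unit disc to
the reversed polynomial `w ↦ ∏ⱼ (1 - w zⱼ)`, gives `|q(p)| ≤ |q(z₀)| (1 + δ)ⁿ`. Passing from `z₀`
to `p` does not shrink any factor `|· - zⱼ|`, and multiplies each of the `k` factors with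
`|z₀ - zⱼ| ≤ r` by at least `δ / r = e`. Hence `eᵏ ≤ (1 + δ)ⁿ ≤ e^{nδ}`, i.e. `k ≤ e n r`; the
zeros on the arc of half-length `r` lie within distance `r` of `z₀`.
-/

open Complex Finset Metric

section MaxModulus

variable {ι : Type*} [Fintype ι] (z : ι → ℂ)

lemma prod_one_sub_mul_eq_pow_mul_prod_inv_sub {w : ℂ} (hw : w ≠ 0) :
    ∏ j, (1 - w * z j) = w ^ Fintype.card ι * ∏ j, (w⁻¹ - z j) := by
  rw [← Finset.card_univ, ← Finset.prod_const, ← Finset.prod_mul_distrib]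
  refine Finset.prod_congr rfl fun j _ => ?_
  field_simp

lemma norm_prod_sub_le_mul_pow_of_forall_norm_eq_one {M : ℝ}
    (hM : ∀ w : ℂ, ‖w‖ = 1 → ‖∏ j, (w - z j)‖ ≤ M) {c : ℂ} (hc : 1 ≤ ‖c‖) :
    ‖∏ j, (c - z j)‖ ≤ M * ‖c‖ ^ Fintype.card ι := by
  have hc₀ : c ≠ 0 := norm_pos_iff.mp (one_pos.trans_le hc)
  have hd : Differentiable ℂ fun w => ∏ j, (1 - w * z j) := by fun_prop
  have hsphere : ∀ w ∈ frontier (ball (0 : ℂ) 1), ‖∏ j, (1 - w * z j)‖ ≤ M := by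
    intro w hw
    rw [frontier_ball 0 one_ne_zero, mem_sphere_zero_iff_norm] at hw
    rw [prod_one_sub_mul_eq_pow_mul_prod_inv_sub z (norm_ne_zero_iff.mp (hw ▸ one_ne_zero)),
      norm_mul, norm_pow, hw, one_pow, one_mul]
    exact hM _ (by rw [norm_inv, hw, inv_one])
  have hinv : c⁻¹ ∈ closure (ball (0 : ℂ) 1) := by
    rw [closure_ball 0 one_ne_zero, mem_closedBall_zero_iff, norm_inv]
    exact inv_le_one_of_one_le₀ hc
  have h := norm_le_of_forall_mem_frontier_norm_le isBounded_ball hd.diffContOnCl hsphere hinv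
  rw [prod_one_sub_mul_eq_pow_mul_prod_inv_sub z (inv_ne_zero hc₀), inv_inv, norm_mul, norm_pow,
    norm_inv, inv_pow, inv_mul_le_iff₀ (by positivity)] at h
  linarith

end MaxModulus

lemma norm_sub_le_norm_smul_sub {E : Type*} [NormedAddCommGroup E] [InnerProductSpace ℝ E]
    {u v : E} (hu : ‖u‖ = 1) (hv : ‖v‖ = 1) {t : ℝ} (ht : 1 ≤ t) :
    ‖u - v‖ ≤ ‖t • u - v‖ := by
  have huv : inner ℝ u v ≤ 1 := by simpa [hu, hv] using real_inner_le_norm u v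
  refine le_of_sq_le_sq ?_ (norm_nonneg _)
  rw [norm_sub_sq_real, norm_sub_sq_real, norm_smul, real_inner_smul_left, hu, hv,
    Real.norm_of_nonneg (by linarith)]
  nlinarith

lemma le_exp_one_mul_mul_of_pow_le {k N : ℕ} {r : ℝ} (hr : 0 < r)
    (h : (Real.exp 1 * r) ^ k ≤ r ^ k * (1 + Real.exp 1 * r) ^ N) :
    (k : ℝ) ≤ Real.exp 1 * N * r := by
  have hk : Real.exp 1 ^ k ≤ (1 + Real.exp 1 * r) ^ N := by
    rw [mul_pow, mul_comm] at h
    exact le_of_mul_le_mul_left h (by positivity)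
  have : Real.exp k ≤ Real.exp (N * (Real.exp 1 * r)) := calc
    Real.exp k = Real.exp 1 ^ k := by rw [← Real.exp_nat_mul, mul_one]
    _ ≤ (1 + Real.exp 1 * r) ^ N := hk
    _ ≤ Real.exp (Real.exp 1 * r) ^ N := by
      gcongr
      linarith [Real.add_one_le_exp (Real.exp 1 * r)]
    _ = Real.exp (N * (Real.exp 1 * r)) := (Real.exp_nat_mul _ N).symm
  linarith [Real.exp_le_exp.mp this]

theorem card_filter_norm_sub_le_le_exp_one_mul {ι : Type*} [Fintype ι] {z : ι → ℂ}
    (hz : ∀ j, ‖z j‖ = 1) {z₀ : ℂ} (hz₀ : ‖z₀‖ = 1)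
    (hmax : ∀ w : ℂ, ‖w‖ = 1 → ‖∏ j, (w - z j)‖ ≤ ‖∏ j, (z₀ - z j)‖) {r : ℝ} (hr : 0 < r) :
    (#{j | ‖z₀ - z j‖ ≤ r} : ℝ) ≤ Real.exp 1 * Fintype.card ι * r := by
  classical
  set T : Finset ι := {j | ‖z₀ - z j‖ ≤ r}
  set δ := Real.exp 1 * r
  have hδ : 0 < δ := by positivity
  set p : ℂ := (1 + δ) • z₀
  have hp : ‖p‖ = 1 + δ := by rw [norm_smul, hz₀, mul_one, Real.norm_of_nonneg (by linarith)]
  have hfar : ∀ j, δ ≤ ‖p - z j‖ := fun j => by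
    linarith [norm_sub_norm_le p (z j), hz j]
  set P := ∏ j ∈ Tᶜ, ‖z₀ - z j‖
  have hP : 0 < P := Finset.prod_pos fun j hj => by
    simp only [T, Finset.mem_compl, Finset.mem_filter_univ, not_le] at hj
    exact hr.trans hj
  have hnear : ‖∏ j, (z₀ - z j)‖ ≤ r ^ #T * P := by
    rw [norm_prod, ← Finset.prod_mul_prod_compl T, ← Finset.prod_const]
    gcongr with j hj
    exact (Finset.mem_filter_univ j).mp hj
  have hout : δ ^ #T * P ≤ ‖∏ j, (p - z j)‖ := by
    rw [norm_prod, ← Finset.prod_mul_prod_compl T, ← Finset.prod_const]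
    gcongr
    · exact hfar _
    · exact Finset.prod_le_prod (fun _ _ => norm_nonneg _) fun j _ =>
        norm_sub_le_norm_smul_sub hz₀ (hz j) (by linarith)
  have hext := norm_prod_sub_le_mul_pow_of_forall_norm_eq_one z hmax (c := p) (by linarith)
  rw [hp] at hext
  refine le_exp_one_mul_mul_of_pow_le hr (le_of_mul_le_mul_right ?_ hP)
  calc δ ^ #T * P ≤ ‖∏ j, (z₀ - z j)‖ * (1 + δ) ^ Fintype.card ι := hout.trans hext
    _ ≤ r ^ #T * P * (1 + δ) ^ Fintype.card ι := by gcongr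
    _ = r ^ #T * (1 + δ) ^ Fintype.card ι * P := by ring

/-- If z₀ maximizes |∏ⱼ (z - zⱼ)| on the unit circle (all |zⱼ| = 1), then for every
r > 0 the number of zⱼ on the arc {z₀·e^{iρ} : ρ ∈ [-r, r]} is at most e·n·r. -/
theorem zeros_near_max_point (n : ℕ) (z : Fin n → ℂ) (hz : ∀ j, ‖z j‖ = 1)
    (z₀ : ℂ) (hz₀ : ‖z₀‖ = 1)
    (hmax : ∀ w : ℂ, ‖w‖ = 1 →
      ‖∏ j, (w - z j)‖ ≤ ‖∏ j, (z₀ - z j)‖)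
    (r : ℝ) (hr : 0 < r) :
    (({j : Fin n | ∃ ρ : ℝ, |ρ| ≤ r ∧ z j = z₀ * Complex.exp (ρ * Complex.I)}).ncard : ℝ)
      ≤ Real.exp 1 * n * r := by
  have harc : {j : Fin n | ∃ ρ : ℝ, |ρ| ≤ r ∧ z j = z₀ * Complex.exp (ρ * Complex.I)} ⊆
      ↑({j | ‖z₀ - z j‖ ≤ r} : Finset (Fin n)) := by
    rintro j ⟨ρ, hρ, hj⟩
    rw [Finset.coe_filter_univ, Set.mem_ofPred_eq, hj, ← mul_one_sub, norm_mul, hz₀, one_mul,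
      norm_sub_rev, mul_comm]
    exact Real.norm_exp_I_mul_ofReal_sub_one_le.trans hρ
  calc _ ≤ (#{j | ‖z₀ - z j‖ ≤ r} : ℝ) := by
        exact_mod_cast (Set.ncard_le_ncard harc).trans (Set.ncard_coe_finset _).le
    _ ≤ Real.exp 1 * n * r := by
        simpa using card_filter_norm_sub_le_le_exp_one_mul hz hz₀ hmax hr
end
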